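/- arXiv:1609.09662 — 2 statements merged into one kernel-verified Lean document; each statement's English description precedes it below -/
import Mathlib

section
/- Every extraspecial 2-group of order greater than 128 is not filled; i.e., it contains a locally maximal product-free set that does not fill the group. -/
open Pointwise

/-- `S` is product-free if `S ∩ SS = ∅`. -/
def ProductFree {G : Type*} [Group G] (S : Set G) : Prop :=
  Disjoint S (S * S)

/-- `S` is locally maximal product-free if it is product-free and not properly
contained in any product-free set. -/
def LocallyMaximalPF {G : Type*} [Group G] (S : Set G) : Prop :=
  ProductFree S ∧ ∀ T : Set G, ProductFree T → S ⊆ T → S = T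

/-- `S` fills `G` (is complete) if every non-identity element lies in `S ∪ SS`. -/
def Fills {G : Type*} [Group G] (S : Set G) : Prop :=
  ∀ g : G, g ≠ 1 → g ∈ S ∪ S * S

/-- `G` is filled if every locally maximal product-free set fills `G`. -/
def Filled (G : Type*) [Group G] : Prop :=
  ∀ S : Set G, LocallyMaximalPF S → Fills S

/-- A finite 2-group is extraspecial if its centre equals its derived subgroup,
has order 2, and contains all squares (equivalently `Z(G) = [G,G] = Φ(G) ≅ C₂`). -/
def IsExtraspecial (G : Type*) [Group G] : Prop :=
  Subgroup.center G = commutator G ∧ Nat.card (Subgroup.center G) = 2 ∧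
    ∀ g : G, g ^ 2 ∈ Subgroup.center G

namespace ESNF

open scoped Classical

noncomputable section

variable {G : Type*} [Group G]

/-- Bundle of elementary consequences of extraspecial-ness. -/
structure Pre (G : Type*) [Group G] where
  z : G
  hz1 : z ≠ 1
  hzz : z * z = 1
  hzcen : ∀ g : G, z * g = g * z
  hcen : ∀ g : G, (∀ h, g * h = h * g) → g = 1 ∨ g = z
  hsq : ∀ g : G, g * g = 1 ∨ g * g = z
  hcom : ∀ g h : G, g * h = h * g ∨ g * h = h * g * z
  hker : ∀ g : G, Abelianization.of g = 1 ↔ (g = 1 ∨ g = z)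

/-- power of the central element -/
def zp (P : Pre G) (c : ZMod 2) : G := if c = 0 then 1 else P.z

lemma zmod2_cases (a : ZMod 2) : a = 0 ∨ a = 1 := by revert a; decide

lemma zmod2_add_eq_zero {a b : ZMod 2} (h : a + b = 0) : a = b := by
  revert h; revert a b; decide

lemma zp_zero (P : Pre G) : zp P (0 : ZMod 2) = 1 := rfl

lemma zp_one (P : Pre G) : zp P (1 : ZMod 2) = P.z := rfl

lemma zp_add (P : Pre G) (a b : ZMod 2) : zp P (a + b) = zp P a * zp P b := by
  rcases zmod2_cases a with ha | ha <;> rcases zmod2_cases b with hb | hb <;>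
    subst ha <;> subst hb <;>
    simp [zp, P.hzz, show (1 + 1 : ZMod 2) = 0 by decide]

lemma zp_central (P : Pre G) (c : ZMod 2) (g : G) : zp P c * g = g * zp P c := by
  rcases zmod2_cases c with h | h <;> subst h <;> simp [zp, P.hzcen]

lemma zp_inj (P : Pre G) {a b : ZMod 2} (h : zp P a = zp P b) : a = b := by
  rcases zmod2_cases a with ha | ha <;> rcases zmod2_cases b with hb | hb <;>
    subst ha <;> subst hb <;> simp_all [zp]
  · exact absurd h.symm P.hz1
  · exact absurd h P.hz1

lemma zp_sq (P : Pre G) (c : ZMod 2) : zp P c * zp P c = 1 := by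
  rcases zmod2_cases c with h | h <;> subst h <;> simp [zp, P.hzz]

/-- square exponent -/
def sqe (g : G) : ZMod 2 := if g * g = 1 then 0 else 1

/-- commutator exponent -/
def come (g h : G) : ZMod 2 := if g * h = h * g then 0 else 1

lemma sqe_spec (P : Pre G) (g : G) : g * g = zp P (sqe g) := by
  unfold sqe zp
  split
  · simpa
  · rcases P.hsq g with h | h
    · simp_all
    · simpa using h

lemma come_spec (P : Pre G) (g h : G) : g * h = h * g * zp P (come g h) := by
  unfold come zp
  split
  · simpa
  · rcases P.hcom g h with hc | hc
    · simp_all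
    · simpa using hc

lemma come_swap (P : Pre G) (g h : G) : come g h = come h g := by
  have h1 := come_spec P g h
  have h2 := come_spec P h g
  have key : g * h = (g * h) * (zp P (come h g) * zp P (come g h)) := by
    calc g * h = h * g * zp P (come g h) := h1
    _ = (g * h * zp P (come h g)) * zp P (come g h) := by rw [← h2]
    _ = (g * h) * (zp P (come h g) * zp P (come g h)) := by rw [mul_assoc]
  have h3 : zp P (come h g) * zp P (come g h) = 1 := (left_eq_mul.mp key).symm ▸ rfl
  rw [← zp_add] at h3
  have := zp_inj P (a := come h g + come g h) (b := 0) (by rw [h3, zp_zero])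
  exact (zmod2_add_eq_zero this).symm

lemma come_self (g : G) : come g g = 0 := by simp [come]

lemma come_one_left (h : G) : come 1 h = 0 := by simp [come]

lemma come_z_left (P : Pre G) (h : G) : come P.z h = 0 := by simp [come, P.hzcen]

lemma come_z_right (P : Pre G) (h : G) : come h P.z = 0 := by
  rw [come_swap P]; exact come_z_left P h

lemma come_mul_left (P : Pre G) (g h k : G) :
    come (g * h) k = come g k + come h k := by
  have e1 : (g * h) * k = k * (g * h) * zp P (come (g*h) k) := come_spec P (g*h) k
  have e2 : (g * h) * k = k * (g * h) * zp P (come g k + come h k) := by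
    calc (g * h) * k = g * (h * k) := by rw [mul_assoc]
    _ = g * (k * h * zp P (come h k)) := by rw [come_spec P h k]
    _ = g * (k * (h * zp P (come h k))) := by rw [mul_assoc (k) h]
    _ = (g * k) * (h * zp P (come h k)) := by rw [← mul_assoc]
    _ = (k * g * zp P (come g k)) * (h * zp P (come h k)) := by rw [come_spec P g k]
    _ = ((k * g) * (zp P (come g k) * h)) * zp P (come h k) := by simp only [mul_assoc]
    _ = ((k * g) * (h * zp P (come g k))) * zp P (come h k) := by
        rw [zp_central P (come g k) h]
    _ = (k * (g * h)) * (zp P (come g k) * zp P (come h k)) := by simp only [mul_assoc]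
    _ = k * (g * h) * zp P (come g k + come h k) := by rw [zp_add]
  exact zp_inj P (mul_left_cancel (e1.symm.trans e2))

lemma come_mul_right (P : Pre G) (g h k : G) :
    come k (g * h) = come k g + come k h := by
  rw [come_swap P, come_mul_left P, come_swap P g k, come_swap P h k]

lemma sqe_mul (P : Pre G) (g h : G) : sqe (g * h) = sqe g + sqe h + come g h := by
  have e1 : (g * h) * (g * h) = zp P (sqe (g*h)) := sqe_spec P (g*h)
  have e2 : (g * h) * (g * h) = zp P (sqe g + sqe h + come g h) := by
    calc (g*h) * (g*h) = g * (h * g) * h := by simp only [mul_assoc]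
    _ = g * (g * h * zp P (come h g)) * h := by rw [come_spec P h g]
    _ = (g * g) * (h * (zp P (come h g) * h)) := by simp only [mul_assoc]
    _ = (g * g) * (h * (h * zp P (come h g))) := by rw [zp_central P (come h g) h]
    _ = (g * g) * ((h * h) * zp P (come h g)) := by rw [← mul_assoc h h]
    _ = zp P (sqe g) * ((h * h) * zp P (come h g)) := by rw [sqe_spec P g]
    _ = zp P (sqe g) * (zp P (sqe h) * zp P (come h g)) := by rw [sqe_spec P h]
    _ = zp P (sqe g + sqe h + come h g) := by rw [zp_add, zp_add]; simp only [mul_assoc]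
    _ = zp P (sqe g + sqe h + come g h) := by rw [come_swap P h g]
  exact zp_inj P (e1.symm.trans e2)

lemma sqe_one : sqe (1 : G) = 0 := by simp [sqe]

lemma sqe_z (P : Pre G) : sqe P.z = 0 := by simp [sqe, P.hzz]

lemma sqe_mul_z (P : Pre G) (g : G) : sqe (g * P.z) = sqe g := by
  rw [sqe_mul P, sqe_z, come_z_right P]; ring

lemma come_mul_z_left (P : Pre G) (g h : G) : come (g * P.z) h = come g h := by
  rw [come_mul_left P, come_z_left P]; ring

lemma come_mul_z_right (P : Pre G) (g h : G) : come g (h * P.z) = come g h := by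
  rw [come_mul_right P, come_z_right P]; ring


/-! ### The quotient vector space -/

/-- The quotient `G / [G,G] = G / Z(G)` as an additive group. -/
abbrev Vq (G : Type*) [Group G] := Additive (Abelianization G)

/-- projection -/
def pim (g : G) : Vq G := Additive.ofMul (Abelianization.of g)

lemma pim_surj : Function.Surjective (pim : G → Vq G) := fun v => by
  obtain ⟨g, hg⟩ := QuotientGroup.mk'_surjective (commutator G) (Additive.toMul v)
  exact ⟨g, congrArg Additive.ofMul hg⟩

lemma pim_mul (g h : G) : pim (g * h) = pim g + pim h := by
  unfold pim; rw [map_mul]; rfl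

lemma pim_one : pim (1 : G) = 0 := by
  unfold pim; rw [map_one]; rfl

lemma pim_inv (g : G) : pim g⁻¹ = - pim g := by
  unfold pim; rw [map_inv]; rfl

lemma pim_eq_zero_iff (P : Pre G) (g : G) : pim g = 0 ↔ (g = 1 ∨ g = P.z) := by
  rw [← P.hker g]
  constructor
  · intro h; exact Additive.ofMul.injective h
  · intro h; exact congrArg Additive.ofMul h

lemma pim_z (P : Pre G) : pim P.z = 0 := (pim_eq_zero_iff P _).mpr (Or.inr rfl)

lemma pim_eq_iff (P : Pre G) (g h : G) : pim g = pim h ↔ (h = g ∨ h = g * P.z) := by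
  constructor
  · intro he
    have h0 : pim (g⁻¹ * h) = 0 := by rw [pim_mul, pim_inv, he]; abel
    rcases (pim_eq_zero_iff P _).mp h0 with h1 | h1
    · left; rw [← mul_left_cancel_iff (a := g⁻¹), h1, inv_mul_cancel]
    · right; rw [← mul_left_cancel_iff (a := g⁻¹), ← mul_assoc, inv_mul_cancel, one_mul, h1]
  · intro he
    rcases he with h1 | h1 <;> subst h1
    · rfl
    · rw [pim_mul, pim_z P, add_zero]

/-- a choice of representatives -/
def rho : Vq G → G := Function.surjInv pim_surj

lemma pim_rho (v : Vq G) : pim (rho v) = v := Function.surjInv_eq pim_surj v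

lemma sqe_eq_of_pim_eq (P : Pre G) {g h : G} (he : pim g = pim h) : sqe g = sqe h := by
  rcases (pim_eq_iff P g h).mp he with h1 | h1 <;> subst h1
  · rfl
  · rw [sqe_mul_z P]

lemma come_eq_of_pim_eq (P : Pre G) {g g' h h' : G} (he : pim g = pim g')
    (he' : pim h = pim h') : come g h = come g' h' := by
  rcases (pim_eq_iff P g g').mp he with h1 | h1 <;>
    rcases (pim_eq_iff P h h').mp he' with h2 | h2 <;> subst h1 <;> subst h2 <;>
    simp [come_mul_z_left P, come_mul_z_right P]

/-- the quadratic form -/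
def qf (P : Pre G) : Vq G → ZMod 2 := fun v => sqe (rho v)

/-- the bilinear (commutator) form -/
def bf (P : Pre G) : Vq G → Vq G → ZMod 2 := fun u v => come (rho u) (rho v)

lemma qf_pim (P : Pre G) (g : G) : qf P (pim g) = sqe g :=
  sqe_eq_of_pim_eq P (by rw [pim_rho])

lemma bf_pim (P : Pre G) (g h : G) : bf P (pim g) (pim h) = come g h :=
  come_eq_of_pim_eq P (by rw [pim_rho]) (by rw [pim_rho])

lemma qf_zero (P : Pre G) : qf P (0 : Vq G) = 0 := by
  rw [← pim_one, qf_pim P, sqe_one]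

lemma bf_symm (P : Pre G) (u v : Vq G) : bf P u v = bf P v u := come_swap P _ _

lemma bf_self (P : Pre G) (v : Vq G) : bf P v v = 0 := come_self _

lemma bf_add_left (P : Pre G) (u u' v : Vq G) :
    bf P (u + u') v = bf P u v + bf P u' v := by
  obtain ⟨a, ha⟩ := pim_surj u
  obtain ⟨a', ha'⟩ := pim_surj u'
  obtain ⟨b, hb⟩ := pim_surj v
  subst ha; subst ha'; subst hb
  rw [← pim_mul, bf_pim P, bf_pim P, bf_pim P, come_mul_left P]

lemma bf_add_right (P : Pre G) (u v v' : Vq G) :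
    bf P u (v + v') = bf P u v + bf P u v' := by
  rw [bf_symm P, bf_add_left P, bf_symm P v u, bf_symm P v' u]

lemma bf_zero_left (P : Pre G) (v : Vq G) : bf P 0 v = 0 := by
  rw [← pim_one, ← pim_rho v, bf_pim P, come_one_left]

lemma bf_zero_right (P : Pre G) (v : Vq G) : bf P v 0 = 0 := by
  rw [bf_symm P, bf_zero_left P]

lemma qf_add (P : Pre G) (u v : Vq G) :
    qf P (u + v) = qf P u + qf P v + bf P u v := by
  obtain ⟨a, ha⟩ := pim_surj u
  obtain ⟨b, hb⟩ := pim_surj v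
  subst ha; subst hb
  rw [← pim_mul, qf_pim P, qf_pim P, qf_pim P, bf_pim P, sqe_mul P]

lemma bf_nondeg (P : Pre G) (v : Vq G) (h : ∀ u, bf P v u = 0) : v = 0 := by
  obtain ⟨g, hg⟩ := pim_surj v
  subst hg
  have hc : ∀ k : G, g * k = k * g := by
    intro k
    have h1 : come g k = 0 := by rw [← bf_pim P, h (pim k)]
    have := come_spec P g k
    rw [h1, zp_zero, mul_one] at this
    exact this
  exact (pim_eq_zero_iff P g).mpr (P.hcen g hc)

lemma vq_add_self (P : Pre G) (v : Vq G) : v + v = 0 := by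
  obtain ⟨g, hg⟩ := pim_surj v
  subst hg
  rw [← pim_mul]
  rcases P.hsq g with h | h <;> rw [h]
  · exact pim_one
  · exact pim_z P

lemma vq_neg (P : Pre G) (v : Vq G) : -v = v := by
  have := vq_add_self P v
  exact neg_eq_of_add_eq_zero_left this

lemma vq_sub (P : Pre G) (u v : Vq G) : u - v = u + v := by
  rw [sub_eq_add_neg, vq_neg P]

lemma vq_add_cancel (P : Pre G) {u v : Vq G} (h : u + v = 0) : u = v := by
  have := vq_add_self P v
  calc u = u + v + v := by rw [add_assoc, this, add_zero]
  _ = v := by rw [h, zero_add]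

/-! ### Linear algebra toolkit -/

section LinAlg

open Module

variable [Module (ZMod 2) (Vq G)] [Module.Finite (ZMod 2) (Vq G)]

lemma zmod2_add_self (a : ZMod 2) : a + a = 0 := by revert a; decide

lemma zmod2_smul {M : Type*} [AddCommGroup M] [Module (ZMod 2) M] (c : ZMod 2) (x : M) :
    c • x = c.val • x := by
  rcases zmod2_cases c with h | h <;> subst h <;> simp [ZMod.val_one]

/-- build a linear functional from an additive map -/
def mkFun (f : Vq G → ZMod 2) (hadd : ∀ x y, f (x + y) = f x + f y) :
    Vq G →ₗ[ZMod 2] ZMod 2 where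
  toFun := f
  map_add' := hadd
  map_smul' := by
    have h0 : f 0 = 0 := by
      have := hadd 0 0
      simpa using this.symm
    intro c x
    rcases zmod2_cases c with h | h <;> subst h <;> simp [h0]

@[simp] lemma mkFun_apply (f : Vq G → ZMod 2) (hadd) (x : Vq G) :
    mkFun f hadd x = f x := rfl

/-- the commutator form, bundled -/
def bform (P : Pre G) : Vq G →ₗ[ZMod 2] Vq G →ₗ[ZMod 2] ZMod 2 :=
  LinearMap.mk₂ (ZMod 2) (bf P)
    (fun u u' v => bf_add_left P u u' v)
    (fun c u v => by
      rcases zmod2_cases c with h | h <;> subst h <;>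
        simp [zero_smul, one_smul, bf_zero_left P])
    (fun u v v' => bf_add_right P u v v')
    (fun c u v => by
      rcases zmod2_cases c with h | h <;> subst h <;>
        simp [zero_smul, one_smul, bf_zero_right P])

@[simp] lemma bform_apply (P : Pre G) (u v : Vq G) : bform P u v = bf P u v := rfl

/-- dimension of the quotient space -/
noncomputable def md : ℕ := finrank (ZMod 2) (Vq G)

lemma isotropic_bound (P : Pre G) (W : Submodule (ZMod 2) (Vq G))
    (hiso : ∀ x ∈ W, ∀ y ∈ W, bf P x y = 0) :
    2 * finrank (ZMod 2) W ≤ finrank (ZMod 2) (Vq G) := by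
  classical
  -- bform is injective hence bijective onto the dual
  have hinj : Function.Injective (bform P) := by
    intro u v huv
    have : ∀ w, bf P (u - v) w = 0 := by
      intro w
      have : bf P u w = bf P v w := by
        rw [← bform_apply P u w, ← bform_apply P v w, huv]
      rw [vq_sub P, bf_add_left P, this]
      exact zmod2_add_self _
    have h0 := bf_nondeg P _ this
    rwa [sub_eq_zero] at h0
  have hrank : finrank (ZMod 2) (Module.Dual (ZMod 2) (Vq G)) = finrank (ZMod 2) (Vq G) :=
    Subspace.dual_finrank_eq
  let e : Vq G ≃ₗ[ZMod 2] Module.Dual (ZMod 2) (Vq G) :=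
    LinearMap.linearEquivOfInjective (bform P) hinj hrank.symm
  -- restriction map to the dual of W
  let r : Vq G →ₗ[ZMod 2] Module.Dual (ZMod 2) W :=
    (Submodule.subtype W).dualMap.comp (bform P)
  have hrsurj : Function.Surjective r := by
    rw [show r = (Submodule.subtype W).dualMap.comp (bform P) from rfl, LinearMap.coe_comp]
    apply Function.Surjective.comp
    · exact LinearMap.dualMap_surjective_of_injective (Submodule.injective_subtype W)
    · intro φ
      refine ⟨e.symm φ, ?_⟩
      have h5 : (bform P) (e.symm φ) = e (e.symm φ) :=
        (LinearMap.linearEquivOfInjective_apply (f := bform P) hinj hrank.symm _).symm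
      rw [h5, e.apply_symm_apply]
  have hker : W ≤ LinearMap.ker r := by
    intro x hx
    rw [LinearMap.mem_ker]
    ext ⟨y, hy⟩
    show bform P x y = 0
    rw [bform_apply]
    exact hiso x hx y hy
  have h1 : finrank (ZMod 2) (LinearMap.range r) + finrank (ZMod 2) (LinearMap.ker r)
      = finrank (ZMod 2) (Vq G) := LinearMap.finrank_range_add_finrank_ker r
  have h2 : finrank (ZMod 2) (LinearMap.range r) = finrank (ZMod 2) W := by
    rw [LinearMap.range_eq_top.mpr hrsurj]
    rw [finrank_top]
    exact Subspace.dual_finrank_eq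
  have h3 : finrank (ZMod 2) W ≤ finrank (ZMod 2) (LinearMap.ker r) :=
    Submodule.finrank_mono hker
  omega

lemma qf_nonconst (P : Pre G) (x₀ : Vq G) (W : Submodule (ZMod 2) (Vq G))
    (hd : finrank (ZMod 2) (Vq G) < 2 * finrank (ZMod 2) W) (t : ZMod 2) :
    ∃ w ∈ W, qf P (x₀ + w) = t := by
  by_cases hvar : ∃ w ∈ W, qf P (x₀ + w) ≠ qf P x₀
  · obtain ⟨w₁, hw₁, hne⟩ := hvar
    rcases zmod2_cases t with ht | ht <;> rcases zmod2_cases (qf P x₀) with h0 | h0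
    · exact ⟨0, W.zero_mem, by rw [add_zero, h0, ht]⟩
    · refine ⟨w₁, hw₁, ?_⟩
      rcases zmod2_cases (qf P (x₀ + w₁)) with h1 | h1
      · rw [h1, ht]
      · rw [h0, h1] at hne; exact absurd rfl hne
    · refine ⟨w₁, hw₁, ?_⟩
      rcases zmod2_cases (qf P (x₀ + w₁)) with h1 | h1
      · rw [h0, h1] at hne; exact absurd rfl hne
      · rw [h1, ht]
    · exact ⟨0, W.zero_mem, by rw [add_zero, h0, ht]⟩
  · exfalso
    push_neg at hvar
    have hiso : ∀ x ∈ W, ∀ y ∈ W, bf P x y = 0 := by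
      have key : ∀ w ∈ W, qf P w + bf P x₀ w = 0 := by
        intro w hw
        have h1 : qf P (x₀ + w) = qf P x₀ + qf P w + bf P x₀ w := qf_add P x₀ w
        rw [hvar w hw] at h1
        have h2 : qf P w + bf P x₀ w = 0 := by
          have h3 := h1.symm
          rw [add_assoc] at h3
          exact add_eq_left.mp h3
        exact h2
      intro x hx y hy
      have h1 : qf P (x₀ + (x + y)) = qf P x₀ := hvar _ (W.add_mem hx hy)
      rw [qf_add P, qf_add P x y, bf_add_right P] at h1
      have hx1 := key x hx
      have hy1 := key y hy
      linear_combination h1 - hx1 - hy1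
    have := isotropic_bound P W hiso
    omega


lemma zmod2_eq_one_of_ne {a : ZMod 2} (h : a ≠ 0) : a = 1 := by
  rcases zmod2_cases a with h1 | h1
  · exact absurd h1 h
  · exact h1

lemma zmod2_add_eq_one_of_ne {a b : ZMod 2} (h : a ≠ b) : a + b = 1 := by
  revert h; revert a b; decide

/-- solve one linear equation -/
lemma solve1 (f : Vq G →ₗ[ZMod 2] ZMod 2) (hf : ∃ a, f a ≠ 0) (t : ZMod 2) :
    ∃ x, f x = t := by
  obtain ⟨a, ha⟩ := hf
  refine ⟨t • a, ?_⟩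
  rw [map_smul, smul_eq_mul, zmod2_eq_one_of_ne ha, mul_one]

/-- a dual pair for two independent functionals -/
lemma dualpair (f g : Vq G →ₗ[ZMod 2] ZMod 2) (hf : ∃ a, f a ≠ 0)
    (hg : ∀ c : ZMod 2, ¬ (∀ x, g x = c * f x)) :
    ∃ a b, f a = 1 ∧ g a = 0 ∧ f b = 0 ∧ g b = 1 := by
  obtain ⟨a0, ha0⟩ := hf
  have ha : f a0 = 1 := zmod2_eq_one_of_ne ha0
  have hb : ∃ b, g b ≠ (g a0) * f b := by
    by_contra hcon
    push_neg at hcon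
    exact hg (g a0) (fun x => by rw [hcon x])
  obtain ⟨b0, hb0⟩ := hb
  set b₁ := b0 + (f b0) • a0 with hb₁
  have hfb : f b₁ = 0 := by
    rw [hb₁, map_add, map_smul, smul_eq_mul, ha, mul_one, zmod2_add_self]
  have hgb : g b₁ = 1 := by
    rw [hb₁, map_add, map_smul, smul_eq_mul]
    have : g b0 + g a0 * f b0 = 1 := by
      have h2 : g b0 ≠ g a0 * f b0 := hb0
      have := zmod2_add_eq_one_of_ne h2
      linear_combination this
    linear_combination this
  set a₁ := a0 + (g a0) • b₁ with ha₁
  refine ⟨a₁, b₁, ?_, ?_, hfb, hgb⟩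
  · rw [ha₁, map_add, map_smul, smul_eq_mul, ha, hfb, mul_zero, add_zero]
  · rw [ha₁, map_add, map_smul, smul_eq_mul, hgb, mul_one, zmod2_add_self]

/-- solve two independent linear equations -/
lemma solve2 (f g : Vq G →ₗ[ZMod 2] ZMod 2) (hf : ∃ a, f a ≠ 0)
    (hg : ∀ c : ZMod 2, ¬ (∀ x, g x = c * f x)) (t₁ t₂ : ZMod 2) :
    ∃ x, f x = t₁ ∧ g x = t₂ := by
  obtain ⟨a, b, hfa, hga, hfb, hgb⟩ := dualpair f g hf hg
  refine ⟨t₁ • a + t₂ • b, ?_, ?_⟩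
  · rw [map_add, map_smul, map_smul, smul_eq_mul, smul_eq_mul, hfa, hfb]; ring
  · rw [map_add, map_smul, map_smul, smul_eq_mul, smul_eq_mul, hga, hgb]; ring

/-- solve three independent linear equations -/
lemma solve3 (f g h : Vq G →ₗ[ZMod 2] ZMod 2) (hf : ∃ a, f a ≠ 0)
    (hg : ∀ c : ZMod 2, ¬ (∀ x, g x = c * f x))
    (hh : ∀ c₁ c₂ : ZMod 2, ¬ (∀ x, h x = c₁ * f x + c₂ * g x)) (t₁ t₂ t₃ : ZMod 2) :
    ∃ x, f x = t₁ ∧ g x = t₂ ∧ h x = t₃ := by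
  obtain ⟨a, b, hfa, hga, hfb, hgb⟩ := dualpair f g hf hg
  have hc : ∃ c, h c ≠ (h a) * f c + (h b) * g c := by
    by_contra hcon
    push_neg at hcon
    exact hh (h a) (h b) (fun x => by rw [hcon x])
  obtain ⟨c0, hc0⟩ := hc
  set c₁ := c0 + (f c0) • a + (g c0) • b with hc₁
  have hfc : f c₁ = 0 := by
    rw [hc₁, map_add, map_add, map_smul, map_smul, smul_eq_mul, smul_eq_mul, hfa, hfb]
    linear_combination zmod2_add_self (f c0)
  have hgc : g c₁ = 0 := by
    rw [hc₁, map_add, map_add, map_smul, map_smul, smul_eq_mul, smul_eq_mul, hga, hgb]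
    linear_combination zmod2_add_self (g c0)
  have hhc : h c₁ = 1 := by
    rw [hc₁, map_add, map_add, map_smul, map_smul, smul_eq_mul, smul_eq_mul]
    have h2 := zmod2_add_eq_one_of_ne hc0
    linear_combination h2
  refine ⟨t₁ • a + t₂ • b + (t₃ + t₁ * h a + t₂ * h b) • c₁, ?_, ?_, ?_⟩
  · rw [map_add, map_add, map_smul, map_smul, map_smul,
      smul_eq_mul, smul_eq_mul, smul_eq_mul, hfa, hfb, hfc]; ring
  · rw [map_add, map_add, map_smul, map_smul, map_smul,
      smul_eq_mul, smul_eq_mul, smul_eq_mul, hga, hgb, hgc]; ring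
  · rw [map_add, map_add, map_smul, map_smul, map_smul,
      smul_eq_mul, smul_eq_mul, smul_eq_mul, hhc]
    linear_combination zmod2_add_self (t₁ * h a) + zmod2_add_self (t₂ * h b)

open Module in
lemma pick1 (P : Pre G) (f : Vq G →ₗ[ZMod 2] ZMod 2) (hf : ∃ a, f a ≠ 0)
    (hm : 2 < finrank (ZMod 2) (Vq G)) (t s : ZMod 2) :
    ∃ x, f x = t ∧ qf P x = s := by
  obtain ⟨x₀, hx₀⟩ := solve1 f hf t
  have hrk : finrank (ZMod 2) (LinearMap.range f) + finrank (ZMod 2) (LinearMap.ker f)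
      = finrank (ZMod 2) (Vq G) := LinearMap.finrank_range_add_finrank_ker f
  have hr1 : finrank (ZMod 2) (LinearMap.range f) ≤ 1 := by
    have := Submodule.finrank_le (LinearMap.range f)
    rwa [finrank_self] at this
  have hd : finrank (ZMod 2) (Vq G) < 2 * finrank (ZMod 2) (LinearMap.ker f) := by omega
  obtain ⟨w, hw, hqw⟩ := qf_nonconst P x₀ (LinearMap.ker f) hd s
  refine ⟨x₀ + w, ?_, hqw⟩
  rw [map_add, LinearMap.mem_ker.mp hw, add_zero, hx₀]

open Module in
lemma pick2 (P : Pre G) (f g : Vq G →ₗ[ZMod 2] ZMod 2) (hf : ∃ a, f a ≠ 0)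
    (hg : ∀ c : ZMod 2, ¬ (∀ x, g x = c * f x))
    (hm : 4 < finrank (ZMod 2) (Vq G)) (t₁ t₂ s : ZMod 2) :
    ∃ x, f x = t₁ ∧ g x = t₂ ∧ qf P x = s := by
  obtain ⟨x₀, hx₁, hx₂⟩ := solve2 f g hf hg t₁ t₂
  set F := f.prod g with hF
  have hrk : finrank (ZMod 2) (LinearMap.range F) + finrank (ZMod 2) (LinearMap.ker F)
      = finrank (ZMod 2) (Vq G) := LinearMap.finrank_range_add_finrank_ker F
  have hr1 : finrank (ZMod 2) (LinearMap.range F) ≤ 2 := by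
    have h1 := Submodule.finrank_le (LinearMap.range F)
    rwa [finrank_prod, finrank_self] at h1
  have hd : finrank (ZMod 2) (Vq G) < 2 * finrank (ZMod 2) (LinearMap.ker F) := by omega
  obtain ⟨w, hw, hqw⟩ := qf_nonconst P x₀ (LinearMap.ker F) hd s
  have hw' : f w = 0 ∧ g w = 0 := by
    have := LinearMap.mem_ker.mp hw
    rw [hF, LinearMap.prod_apply] at this
    exact Prod.mk_eq_zero.mp this
  exact ⟨x₀ + w, by rw [map_add, hw'.1, add_zero, hx₁],
    by rw [map_add, hw'.2, add_zero, hx₂], hqw⟩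

open Module in
lemma pick3 (P : Pre G) (f g h : Vq G →ₗ[ZMod 2] ZMod 2) (hf : ∃ a, f a ≠ 0)
    (hg : ∀ c : ZMod 2, ¬ (∀ x, g x = c * f x))
    (hh : ∀ c₁ c₂ : ZMod 2, ¬ (∀ x, h x = c₁ * f x + c₂ * g x))
    (hm : 6 < finrank (ZMod 2) (Vq G)) (t₁ t₂ t₃ s : ZMod 2) :
    ∃ x, f x = t₁ ∧ g x = t₂ ∧ h x = t₃ ∧ qf P x = s := by
  obtain ⟨x₀, hx₁, hx₂, hx₃⟩ := solve3 f g h hf hg hh t₁ t₂ t₃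
  set F := f.prod (g.prod h) with hF
  have hrk : finrank (ZMod 2) (LinearMap.range F) + finrank (ZMod 2) (LinearMap.ker F)
      = finrank (ZMod 2) (Vq G) := LinearMap.finrank_range_add_finrank_ker F
  have hr1 : finrank (ZMod 2) (LinearMap.range F) ≤ 3 := by
    have h1 := Submodule.finrank_le (LinearMap.range F)
    rwa [finrank_prod, finrank_prod, finrank_self] at h1
  have hd : finrank (ZMod 2) (Vq G) < 2 * finrank (ZMod 2) (LinearMap.ker F) := by omega
  obtain ⟨w, hw, hqw⟩ := qf_nonconst P x₀ (LinearMap.ker F) hd s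
  have hw' : f w = 0 ∧ g w = 0 ∧ h w = 0 := by
    have h2 := LinearMap.mem_ker.mp hw
    rw [hF, LinearMap.prod_apply] at h2
    have h3 := Prod.mk_eq_zero.mp h2
    have h4 := h3.2
    rw [LinearMap.prod_apply] at h4
    exact ⟨h3.1, Prod.mk_eq_zero.mp h4⟩
  exact ⟨x₀ + w, by rw [map_add, hw'.1, add_zero, hx₁],
    by rw [map_add, hw'.2.1, add_zero, hx₂],
    by rw [map_add, hw'.2.2, add_zero, hx₃], hqw⟩

/-- the functional `bf P · v`, bundled -/
def bfun (P : Pre G) (v : Vq G) : Vq G →ₗ[ZMod 2] ZMod 2 :=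
  mkFun (fun u => bf P u v) (fun x y => bf_add_left P x y v)

@[simp] lemma bfun_apply (P : Pre G) (v u : Vq G) : bfun P v u = bf P u v := rfl

lemma bfun_ne_zero (P : Pre G) {v : Vq G} (hv : v ≠ 0) : ∃ a, bfun P v a ≠ 0 := by
  by_contra hcon
  push_neg at hcon
  exact hv (bf_nondeg P v (fun u => by rw [bf_symm P]; exact hcon u))

lemma bfun_inj (P : Pre G) {v w : Vq G} (h : ∀ u, bf P u v = bf P u w) : v = w := by
  have : ∀ u, bf P (v + w) u = 0 := by
    intro u
    rw [bf_add_left P, bf_symm P v u, bf_symm P w u, h u, zmod2_add_self]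
  exact vq_add_cancel P (bf_nondeg P _ this)

open Module in
lemma span_q1 (P : Pre G) (hm : 2 < finrank (ZMod 2) (Vq G)) (v : Vq G) :
    v ∈ Submodule.span (ZMod 2) {w : Vq G | qf P w = 1} := by
  rcases zmod2_cases (qf P v) with hq | hq
  · rcases eq_or_ne v 0 with h0 | h0
    · rw [h0]; exact Submodule.zero_mem _
    · obtain ⟨w, hw1, hw2⟩ := pick1 P (bfun P v) (bfun_ne_zero P h0) hm 0 1
      have hvw : qf P (v + w) = 1 := by
        rw [qf_add P, hq, hw2, bf_symm P, ← bfun_apply P v w, hw1]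
        ring
      have : v = w + (v + w) := by
        rw [← add_assoc, add_comm w v, add_assoc, vq_add_self P, add_zero]
      rw [this]
      exact Submodule.add_mem _ (Submodule.subset_span hw2) (Submodule.subset_span hvw)
  · exact Submodule.subset_span hq

end LinAlg




/-! ### Ordered products and the cocycle -/

section ListProd

variable (P : Pre G) {n : ℕ} (gi : Fin n → G)

/-- ordered product with exponents -/
def Pl (l : List (Fin n)) (a : Fin n → ZMod 2) : G :=
  (l.map (fun i => gi i ^ (a i).val)).prod

/-- the cocycle of the ordered-product section -/
def cl (l : List (Fin n)) (a b : Fin n → ZMod 2) : ZMod 2 :=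
  match l with
  | [] => 0
  | i :: tl => b i * ((tl.map (fun j => a j * come (gi j) (gi i))).sum)
      + a i * b i * sqe (gi i) + cl tl a b

@[simp] lemma Pl_nil (a) : Pl gi ([] : List (Fin n)) a = 1 := rfl

@[simp] lemma Pl_cons (i : Fin n) (tl : List (Fin n)) (a) :
    Pl gi (i :: tl) a = gi i ^ (a i).val * Pl gi tl a := by
  unfold Pl
  rw [List.map_cons, List.prod_cons]

@[simp] lemma cl_nil (a b) : cl gi ([] : List (Fin n)) a b = 0 := rfl

lemma cl_cons (i : Fin n) (tl : List (Fin n)) (a b) :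
    cl gi (i :: tl) a b = b i * ((tl.map (fun j => a j * come (gi j) (gi i))).sum)
      + a i * b i * sqe (gi i) + cl gi tl a b := rfl

lemma zmod2_val_ne (e : ZMod 2) (he : e ≠ 0) : e.val = 1 := by
  revert he; revert e; decide

lemma zmod2_val_zero : (0 : ZMod 2).val = 0 := rfl

lemma pow_val_zero (x : G) : x ^ (0 : ZMod 2).val = 1 := pow_zero x

lemma pow_val_one (x : G) : x ^ (1 : ZMod 2).val = x := pow_one x

lemma mul_zp_right_comm (g h : G) (c : ZMod 2) :
    g * zp P c * h = g * h * zp P c := by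
  rw [mul_assoc g, zp_central P c h, ← mul_assoc]

lemma pow_comm_spec (x y : G) (e f : ZMod 2) :
    x ^ e.val * y ^ f.val = y ^ f.val * x ^ e.val * zp P (e * f * come x y) := by
  rcases zmod2_cases e with he | he <;> rcases zmod2_cases f with hf | hf <;>
      subst he <;> subst hf <;>
    simp [pow_val_zero, pow_val_one, zp_zero]
  exact come_spec P x y

lemma pow_add_spec (x : G) (e f : ZMod 2) :
    x ^ e.val * x ^ f.val = x ^ (e + f).val * zp P (e * f * sqe x) := by
  rcases zmod2_cases e with he | he <;> rcases zmod2_cases f with hf | hf <;>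
      subst he <;> subst hf <;>
    simp [pow_val_zero, pow_val_one, zp_zero, show ((1:ZMod 2)+1).val = 0 by decide]
  exact sqe_spec P x

lemma zp_shuffle (x y : G) (c1 c2 c3 : ZMod 2) :
    (x * zp P c1) * (y * zp P c2) * zp P c3 = (x * y) * zp P (c1 + c2 + c3) := by
  rw [zp_add, zp_add]
  calc (x * zp P c1) * (y * zp P c2) * zp P c3
      = x * (zp P c1 * y) * (zp P c2 * zp P c3) := by simp only [mul_assoc]
    _ = x * (y * zp P c1) * (zp P c2 * zp P c3) := by rw [zp_central]
    _ = x * y * (zp P c1 * zp P c2 * zp P c3) := by simp only [mul_assoc]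

lemma swap_spec (l : List (Fin n)) (x : G) (e : ZMod 2) (a : Fin n → ZMod 2) :
    x ^ e.val * Pl gi l a = Pl gi l a * x ^ e.val *
      zp P (e * ((l.map (fun j => a j * come (gi j) x)).sum)) := by
  induction l with
  | nil => simp [zp, mul_zero]
  | cons j tl ih =>
    rw [Pl_cons, List.map_cons, List.sum_cons]
    calc x ^ e.val * (gi j ^ (a j).val * Pl gi tl a)
        = (x ^ e.val * gi j ^ (a j).val) * Pl gi tl a := by rw [mul_assoc]
      _ = (gi j ^ (a j).val * x ^ e.val * zp P (e * a j * come x (gi j))) * Pl gi tl a := by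
          rw [pow_comm_spec P]
      _ = gi j ^ (a j).val * (x ^ e.val * Pl gi tl a) * zp P (e * a j * come x (gi j)) := by
          simp only [mul_assoc]
          congr 1
          congr 1
          exact zp_central P _ _
      _ = gi j ^ (a j).val * (Pl gi tl a * x ^ e.val *
            zp P (e * ((tl.map (fun j => a j * come (gi j) x)).sum))) *
            zp P (e * a j * come x (gi j)) := by rw [ih]
      _ = (gi j ^ (a j).val * Pl gi tl a) * x ^ e.val *
            (zp P (e * ((tl.map (fun j => a j * come (gi j) x)).sum)) *
             zp P (e * a j * come x (gi j))) := by simp only [mul_assoc]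
      _ = Pl gi (j :: tl) a * x ^ e.val *
            zp P (e * (a j * come (gi j) x + (tl.map (fun j => a j * come (gi j) x)).sum)) := by
          rw [Pl_cons, ← zp_add]
          have hco : e * ((tl.map (fun j => a j * come (gi j) x)).sum) + e * a j * come x (gi j)
              = e * (a j * come (gi j) x + (tl.map (fun j => a j * come (gi j) x)).sum) := by
            rw [come_swap P x (gi j)]; ring
          rw [hco]

lemma main_spec (l : List (Fin n)) (a b : Fin n → ZMod 2) :
    Pl gi l a * Pl gi l b = Pl gi l (a + b) * zp P (cl gi l a b) := by
  induction l with
  | nil => simp [zp]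
  | cons i tl ih =>
    have hswap := swap_spec P gi tl (gi i) (b i) a
    have hswap' : Pl gi tl a * gi i ^ (b i).val = gi i ^ (b i).val * Pl gi tl a *
        zp P (b i * ((tl.map (fun j => a j * come (gi j) (gi i))).sum)) := by
      rw [hswap, mul_assoc, zp_sq P, mul_one]
    calc Pl gi (i :: tl) a * Pl gi (i :: tl) b
        = gi i ^ (a i).val * (Pl gi tl a * gi i ^ (b i).val) * Pl gi tl b := by
          rw [Pl_cons, Pl_cons]; simp only [mul_assoc]
      _ = gi i ^ (a i).val * (gi i ^ (b i).val * Pl gi tl a *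
            zp P (b i * ((tl.map (fun j => a j * come (gi j) (gi i))).sum))) * Pl gi tl b := by
          rw [hswap']
      _ = (gi i ^ (a i).val * gi i ^ (b i).val) * (Pl gi tl a * Pl gi tl b) *
            zp P (b i * ((tl.map (fun j => a j * come (gi j) (gi i))).sum)) := by
          simp only [mul_assoc]
          congr 1
          congr 1
          congr 1
          exact zp_central P _ _
      _ = (gi i ^ (a i + b i).val * zp P (a i * b i * sqe (gi i))) *
            (Pl gi tl (a + b) * zp P (cl gi tl a b)) *
            zp P (b i * ((tl.map (fun j => a j * come (gi j) (gi i))).sum)) := by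
          rw [ih, pow_add_spec P (gi i) (a i) (b i)]
      _ = (gi i ^ (a i + b i).val * Pl gi tl (a + b)) *
            zp P ((a i * b i * sqe (gi i)) + (cl gi tl a b) +
              (b i * ((tl.map (fun j => a j * come (gi j) (gi i))).sum))) := by
          rw [zp_shuffle P]
      _ = Pl gi (i :: tl) (a + b) * zp P (cl gi (i :: tl) a b) := by
          rw [Pl_cons, cl_cons, Pi.add_apply]
          have hco : (a i * b i * sqe (gi i)) + (cl gi tl a b) +
              (b i * ((tl.map (fun j => a j * come (gi j) (gi i))).sum))
              = b i * ((tl.map (fun j => a j * come (gi j) (gi i))).sum)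
                + a i * b i * sqe (gi i) + cl gi tl a b := by ring
          rw [hco]

lemma list_sum_add {ι : Type*} (l : List ι) (f g : ι → ZMod 2) :
    (l.map (fun j => f j + g j)).sum = (l.map f).sum + (l.map g).sum := by
  induction l with
  | nil => simp
  | cons i tl ih => simp [ih]; ring

lemma list_sum_zero {ι : Type*} (l : List ι) (f : ι → ZMod 2) (h : ∀ j ∈ l, f j = 0) :
    (l.map f).sum = 0 := by
  apply List.sum_eq_zero
  intro x hx
  obtain ⟨j, hj, rfl⟩ := List.mem_map.mp hx
  exact h j hj

lemma cl_add_left (l : List (Fin n)) (a a' b : Fin n → ZMod 2) :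
    cl gi l (a + a') b = cl gi l a b + cl gi l a' b := by
  induction l with
  | nil => simp
  | cons i tl ih =>
    rw [cl_cons, cl_cons, cl_cons, ih]
    simp only [Pi.add_apply]
    have : (tl.map (fun j => (a j + a' j) * come (gi j) (gi i))).sum
        = (tl.map (fun j => a j * come (gi j) (gi i))).sum
          + (tl.map (fun j => a' j * come (gi j) (gi i))).sum := by
      rw [← list_sum_add]
      congr 1
      apply List.map_congr_left
      intro j _
      ring
    rw [this]
    ring

lemma cl_add_right (l : List (Fin n)) (a b b' : Fin n → ZMod 2) :
    cl gi l a (b + b') = cl gi l a b + cl gi l a b' := by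
  induction l with
  | nil => simp
  | cons i tl ih =>
    rw [cl_cons, cl_cons, cl_cons, ih]
    simp only [Pi.add_apply]
    ring

lemma cl_zero_left (l : List (Fin n)) (a b : Fin n → ZMod 2)
    (h : ∀ j ∈ l, a j = 0) : cl gi l a b = 0 := by
  induction l with
  | nil => simp
  | cons i tl ih =>
    rw [cl_cons, ih (fun j hj => h j (List.mem_cons_of_mem i hj))]
    rw [h i List.mem_cons_self]
    rw [list_sum_zero tl _ (fun j hj => by
      rw [h j (List.mem_cons_of_mem i hj)]; ring)]
    ring

lemma cl_zero_right (l : List (Fin n)) (a b : Fin n → ZMod 2)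
    (h : ∀ j ∈ l, b j = 0) : cl gi l a b = 0 := by
  induction l with
  | nil => simp
  | cons i tl ih =>
    rw [cl_cons, ih (fun j hj => h j (List.mem_cons_of_mem i hj))]
    rw [h i List.mem_cons_self]
    ring

lemma cl_delta_min (l : List (Fin n)) (a b : Fin n → ZMod 2) (k : Fin n)
    (hpw : l.Pairwise (· < ·)) (hk : k ∈ l) (ha1 : a k = 1)
    (ha0 : ∀ j, j ≠ k → a j = 0) (hb : ∀ j, j < k → b j = 0) :
    cl gi l a b = b k * sqe (gi k) := by
  induction l with
  | nil => exact absurd hk List.not_mem_nil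
  | cons i tl ih =>
    obtain ⟨hrel, hpw'⟩ := List.pairwise_cons.mp hpw
    rcases List.mem_cons.mp hk with hik | hktl
    · subst hik
      rw [cl_cons, ha1]
      rw [list_sum_zero tl _ (fun j hj => by
        rw [ha0 j (ne_of_gt (hrel j hj))]; ring)]
      rw [cl_zero_left gi tl a b (fun j hj => ha0 j (ne_of_gt (hrel j hj)))]
      ring
    · have hik : i < k := hrel k hktl
      rw [cl_cons, ih hpw' hktl]
      rw [hb i hik, ha0 i (ne_of_lt hik)]
      ring

lemma cl_delta_max (l : List (Fin n)) (a b : Fin n → ZMod 2) (k : Fin n)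
    (hpw : l.Pairwise (· < ·)) (hk : k ∈ l) (hb1 : b k = 1)
    (hb0 : ∀ j, j ≠ k → b j = 0) (ha : ∀ j, k < j → a j = 0) :
    cl gi l a b = a k * sqe (gi k) := by
  induction l with
  | nil => exact absurd hk List.not_mem_nil
  | cons i tl ih =>
    obtain ⟨hrel, hpw'⟩ := List.pairwise_cons.mp hpw
    rcases List.mem_cons.mp hk with hik | hktl
    · subst hik
      rw [cl_cons, hb1]
      rw [list_sum_zero tl _ (fun j hj => by
        rw [ha j (hrel j hj)]; ring)]
      rw [cl_zero_right gi tl a b (fun j hj => hb0 j (ne_of_gt (hrel j hj)))]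
      ring
    · have hik : i < k := hrel k hktl
      rw [cl_cons, ih hpw' hktl]
      rw [hb0 i (ne_of_lt hik)]
      ring

end ListProd



/-! ### The section and its cocycle -/

section Sigma

open Module

variable (P : Pre G) [Module (ZMod 2) (Vq G)] [Module.Finite (ZMod 2) (Vq G)]

lemma exists_q1_basis (hm : 2 < finrank (ZMod 2) (Vq G)) :
    ∃ (bas : Basis (Fin (finrank (ZMod 2) (Vq G))) (ZMod 2) (Vq G)),
      ∀ i, qf P (bas i) = 1 := by
  classical
  obtain ⟨b, hbsub, hbspan, hbind⟩ :=
    exists_linearIndependent (ZMod 2) {w : Vq G | qf P w = 1}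
  have hspan : Submodule.span (ZMod 2) b = ⊤ := by
    rw [hbspan]
    rw [eq_top_iff]
    intro v _
    exact span_q1 P hm v
  let bas0 : Basis b (ZMod 2) (Vq G) := Basis.mk hbind (by
    rw [Subtype.range_coe]
    rw [hspan])
  have hfin : b.Finite := hbind.setFinite
  haveI : Fintype b := hfin.fintype
  have hcard : finrank (ZMod 2) (Vq G) = Fintype.card b := Module.finrank_eq_card_basis bas0
  let e : b ≃ Fin (finrank (ZMod 2) (Vq G)) := by
    rw [hcard]
    exact Fintype.equivFin b
  refine ⟨bas0.reindex e, fun i => ?_⟩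
  rw [Basis.reindex_apply]
  have : (bas0 (e.symm i) : Vq G) ∈ {w : Vq G | qf P w = 1} := by
    apply hbsub
    have : bas0 (e.symm i) = ((e.symm i : b) : Vq G) := Basis.mk_apply _ _ _
    rw [this]
    exact (e.symm i).2
  exact this

variable {nn : ℕ} (bas : Basis (Fin nn) (ZMod 2) (Vq G))

/-- chosen lifts of the basis -/
def gi : Fin nn → G := fun i => rho (bas i)

lemma pim_gi (i : Fin nn) : pim (gi bas i) = bas i := pim_rho _

lemma sqe_gi (hq1 : ∀ i, qf P (bas i) = 1) (i : Fin nn) : sqe (gi bas i) = 1 := by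
  have : qf P (bas i) = sqe (gi bas i) := rfl
  rw [← this]
  exact hq1 i

/-- coordinates -/
def ar (v : Vq G) : Fin nn → ZMod 2 := fun i => bas.repr v i

lemma ar_add (u v : Vq G) : ar bas (u + v) = ar bas u + ar bas v := by
  funext i
  simp [ar]

lemma ar_zero : ar bas (0 : Vq G) = 0 := by
  funext i
  simp [ar]

lemma ar_basis (k j : Fin nn) : ar bas (bas k) j = if j = k then 1 else 0 := by
  simp only [ar, Basis.repr_self]
  rcases eq_or_ne j k with h | h
  · subst h; simp
  · rw [Finsupp.single_apply, if_neg (Ne.symm h), if_neg h]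

lemma ar_eq_zero {v : Vq G} (h : ∀ i, ar bas v i = 0) : v = 0 := by
  rw [← Basis.forall_coord_eq_zero_iff bas]
  intro i
  exact h i

/-- the multiplicative section -/
def sig (v : Vq G) : G := Pl (gi bas) (List.finRange nn) (ar bas v)

/-- the cocycle -/
def chat (u v : Vq G) : ZMod 2 := cl (gi bas) (List.finRange nn) (ar bas u) (ar bas v)

lemma sig_mul (u v : Vq G) :
    sig bas u * sig bas v = sig bas (u + v) * zp P (chat bas u v) := by
  unfold sig chat
  rw [ar_add bas u v]
  exact main_spec P (gi bas) _ _ _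

lemma Pl_one (l : List (Fin nn)) (a : Fin nn → ZMod 2) (h : ∀ j ∈ l, a j = 0) :
    Pl (gi bas) l a = 1 := by
  induction l with
  | nil => rfl
  | cons i tl ih =>
    rw [Pl_cons, h i List.mem_cons_self, ih (fun j hj => h j (List.mem_cons_of_mem i hj))]
    simp

lemma sig_zero : sig bas (0 : Vq G) = 1 := by
  unfold sig
  apply Pl_one
  intro j _
  rw [ar_zero]
  rfl

lemma pim_pow_val (g : G) (e : ZMod 2) : pim (g ^ e.val) = e • pim g := by
  rcases zmod2_cases e with h | h <;> subst h
  · rw [pow_val_zero, zero_smul]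
    exact pim_one
  · rw [pow_val_one, one_smul]

lemma pim_sig (v : Vq G) : pim (sig bas v) = v := by
  unfold sig
  have key : ∀ l : List (Fin nn), pim (Pl (gi bas) l (ar bas v))
      = (l.map (fun i => (ar bas v i) • bas i)).sum := by
    intro l
    induction l with
    | nil => exact pim_one
    | cons i tl ih =>
      rw [Pl_cons, pim_mul, ih, List.map_cons, List.sum_cons, pim_pow_val, pim_gi]
  rw [key]
  have : ((List.finRange nn).map (fun i => (ar bas v i) • bas i)).sum
      = ∑ i : Fin nn, (bas.repr v i) • bas i := by
    rw [Fin.sum_univ_def]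
    rfl
  rw [this, Basis.sum_repr]

lemma chat_diag (v : Vq G) : chat bas v v = qf P v := by
  have h1 := sig_mul P bas v v
  rw [vq_add_self P, sig_zero, one_mul] at h1
  have h2 : sig bas v * sig bas v = zp P (qf P v) := by
    rw [sqe_spec P (sig bas v)]
    congr 1
    rw [← qf_pim P (sig bas v), pim_sig]
  exact zp_inj P (h1.symm.trans h2)

lemma chat_add_left (u u' v : Vq G) :
    chat bas (u + u') v = chat bas u v + chat bas u' v := by
  unfold chat
  rw [ar_add]
  exact cl_add_left _ _ _ _ _

lemma chat_add_right (u v v' : Vq G) :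
    chat bas u (v + v') = chat bas u v + chat bas u v' := by
  unfold chat
  rw [ar_add]
  exact cl_add_right _ _ _ _ _

lemma chat_zero_left (v : Vq G) : chat bas (0 : Vq G) v = 0 := by
  have h2 := chat_add_left bas 0 0 v
  rw [add_zero] at h2
  exact left_eq_add.mp h2

lemma chat_zero_right (v : Vq G) : chat bas v (0 : Vq G) = 0 := by
  have h2 := chat_add_right bas v 0 0
  rw [add_zero] at h2
  exact left_eq_add.mp h2

lemma bf_sig (u v : Vq G) : bf P u v = come (sig bas u) (sig bas v) := by
  rw [← bf_pim P, pim_sig, pim_sig]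

lemma chat_comm (u v : Vq G) : chat bas u v + chat bas v u = bf P u v := by
  have h1 := sig_mul P bas u v
  have h2 := sig_mul P bas v u
  rw [add_comm v u] at h2
  have h3 : sig bas u * sig bas v
      = sig bas (u + v) * zp P (chat bas v u) * zp P (come (sig bas u) (sig bas v)) := by
    rw [← h2]
    exact come_spec P _ _
  rw [h1] at h3
  rw [mul_assoc, ← zp_add] at h3
  have h4 := zp_inj P (mul_left_cancel h3)
  rw [← bf_sig P bas] at h4
  linear_combination h4 + zmod2_add_self (chat bas v u)

lemma chat_left_nondeg (hq1 : ∀ i, qf P (bas i) = 1) {v : Vq G} (h : ∀ u, chat bas u v = 0) : v = 0 := by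
  classical
  by_contra hv
  have hex : ∃ k, ar bas v k ≠ 0 := by
    by_contra hc
    push_neg at hc
    exact hv (ar_eq_zero bas hc)
  set S := Finset.univ.filter (fun j => ar bas v j ≠ 0) with hS
  have hSne : S.Nonempty := by
    obtain ⟨k, hk⟩ := hex
    exact ⟨k, by simp [hS, hk]⟩
  set k := S.min' hSne with hkdef
  have hkS : k ∈ S := S.min'_mem hSne
  have hkne : ar bas v k ≠ 0 := by
    have := hkS
    rw [hS] at this
    simpa using this
  have hmin : ∀ j, j < k → ar bas v j = 0 := by
    intro j hj
    by_contra hc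
    have : j ∈ S := by simp [hS, hc]
    have := S.min'_le j this
    omega
  have := h (bas k)
  unfold chat at this
  rw [cl_delta_min (gi bas) _ _ _ k (List.pairwise_lt_finRange nn) (List.mem_finRange k)
    (by rw [ar_basis]; simp) (fun j hj => by rw [ar_basis]; simp [hj]) hmin] at this
  rw [sqe_gi P bas hq1, mul_one] at this
  exact hkne this

lemma chat_right_nondeg (hq1 : ∀ i, qf P (bas i) = 1) {v : Vq G} (h : ∀ u, chat bas v u = 0) : v = 0 := by
  classical
  by_contra hv
  have hex : ∃ k, ar bas v k ≠ 0 := by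
    by_contra hc
    push_neg at hc
    exact hv (ar_eq_zero bas hc)
  set S := Finset.univ.filter (fun j => ar bas v j ≠ 0) with hS
  have hSne : S.Nonempty := by
    obtain ⟨k, hk⟩ := hex
    exact ⟨k, by simp [hS, hk]⟩
  set k := S.max' hSne with hkdef
  have hkS : k ∈ S := S.max'_mem hSne
  have hkne : ar bas v k ≠ 0 := by
    have := hkS
    rw [hS] at this
    simpa using this
  have hmax : ∀ j, k < j → ar bas v j = 0 := by
    intro j hj
    by_contra hc
    have : j ∈ S := by simp [hS, hc]
    have := S.le_max' j this
    omega
  have := h (bas k)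
  unfold chat at this
  rw [cl_delta_max (gi bas) _ _ _ k (List.pairwise_lt_finRange nn) (List.mem_finRange k)
    (by rw [ar_basis]; simp) (fun j hj => by rw [ar_basis]; simp [hj]) hmax] at this
  rw [sqe_gi P bas hq1, mul_one] at this
  exact hkne this

/-- the map `v ↦ chat (-, v)` into the dual -/
def cmap0 : Vq G →ₗ[ZMod 2] Module.Dual (ZMod 2) (Vq G) where
  toFun := fun v => mkFun (fun u => chat bas u v) (fun x y => chat_add_left bas x y v)
  map_add' := fun v v' => by
    ext u
    simp [chat_add_right]
  map_smul' := fun c v => by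
    rcases zmod2_cases c with h | h <;> subst h <;> ext u <;>
      simp [chat_zero_right]

/-- the map `v ↦ chat (v, -)` into the dual -/
def cmap1 : Vq G →ₗ[ZMod 2] Module.Dual (ZMod 2) (Vq G) where
  toFun := fun v => mkFun (fun u => chat bas v u) (fun x y => chat_add_right bas v x y)
  map_add' := fun v v' => by
    ext u
    simp [chat_add_left]
  map_smul' := fun c v => by
    rcases zmod2_cases c with h | h <;> subst h <;> ext u <;>
      simp [chat_zero_left]

/-- the map `v ↦ bf (-, v)` into the dual -/
def bdual (P : Pre G) : Vq G →ₗ[ZMod 2] Module.Dual (ZMod 2) (Vq G) where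
  toFun := fun v => bfun P v
  map_add' := fun v v' => by
    ext u
    simp [bf_add_right]
  map_smul' := fun c v => by
    rcases zmod2_cases c with h | h <;> subst h <;> ext u <;>
      simp [bf_zero_right]

@[simp] lemma cmap0_apply (v u : Vq G) : cmap0 bas v u = chat bas u v := rfl
@[simp] lemma cmap1_apply (v u : Vq G) : cmap1 bas v u = chat bas v u := rfl
@[simp] lemma bdual_apply (v u : Vq G) : bdual P v u = bf P u v := rfl

lemma cmap0_inj (hq1 : ∀ i, qf P (bas i) = 1) : Function.Injective (cmap0 bas) := by
  intro v w h
  have h1 : ∀ u, chat bas u v = chat bas u w := fun u => by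
    have := DFunLike.congr_fun h u
    simpa using this
  have h2 : ∀ u, chat bas u (v + w) = 0 := fun u => by
    rw [chat_add_right, h1 u, zmod2_add_self]
  exact vq_add_cancel P (chat_left_nondeg P bas hq1 h2)

lemma cmap1_inj (hq1 : ∀ i, qf P (bas i) = 1) : Function.Injective (cmap1 bas) := by
  intro v w h
  have h1 : ∀ u, chat bas v u = chat bas w u := fun u => by
    have := DFunLike.congr_fun h u
    simpa using this
  have h2 : ∀ u, chat bas (v + w) u = 0 := fun u => by
    rw [chat_add_left, h1 u, zmod2_add_self]
  exact vq_add_cancel P (chat_right_nondeg P bas hq1 h2)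

open Module in
/-- solution operator for `chat (-, T0 f) = bf (-, f)` -/
def T0 (hq1 : ∀ i, qf P (bas i) = 1) : Vq G →ₗ[ZMod 2] Vq G :=
  (LinearMap.linearEquivOfInjective (cmap0 bas) (cmap0_inj P bas hq1)
    Subspace.dual_finrank_eq.symm).symm.toLinearMap ∘ₗ bdual P

open Module in
/-- solution operator for `chat (T1 f, -) = bf (-, f)` -/
def T1 (hq1 : ∀ i, qf P (bas i) = 1) : Vq G →ₗ[ZMod 2] Vq G :=
  (LinearMap.linearEquivOfInjective (cmap1 bas) (cmap1_inj P bas hq1)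
    Subspace.dual_finrank_eq.symm).symm.toLinearMap ∘ₗ bdual P

lemma T0_spec (hq1 : ∀ i, qf P (bas i) = 1) (f u : Vq G) : chat bas u (T0 P bas hq1 f) = bf P u f := by
  have h1 : cmap0 bas (T0 P bas hq1 f) = bdual P f := by
    unfold T0
    rw [LinearMap.comp_apply]
    have := LinearMap.linearEquivOfInjective_apply (f := cmap0 bas) (cmap0_inj P bas hq1)
      Subspace.dual_finrank_eq.symm
    rw [← this]
    exact LinearEquiv.apply_symm_apply _ _
  have := DFunLike.congr_fun h1 u
  simpa using this

lemma T1_spec (hq1 : ∀ i, qf P (bas i) = 1) (f u : Vq G) : chat bas (T1 P bas hq1 f) u = bf P u f := by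
  have h1 : cmap1 bas (T1 P bas hq1 f) = bdual P f := by
    unfold T1
    rw [LinearMap.comp_apply]
    have := LinearMap.linearEquivOfInjective_apply (f := cmap1 bas) (cmap1_inj P bas hq1)
      Subspace.dual_finrank_eq.symm
    rw [← this]
    exact LinearEquiv.apply_symm_apply _ _
  have := DFunLike.congr_fun h1 u
  simpa using this

lemma claim1 (hq1 : ∀ i, qf P (bas i) = 1) (f : Vq G) : bf P (T0 P bas hq1 f) f = bf P (T1 P bas hq1 f) f := by
  have h2 := T1_spec P bas hq1 f (T0 P bas hq1 f)
  have h1 := T0_spec P bas hq1 f (T1 P bas hq1 f)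
  exact h2.symm.trans h1

/-- the auxiliary quadratic function -/
def gq (hq1 : ∀ i, qf P (bas i) = 1) (x : Vq G) : ZMod 2 := bf P (T0 P bas hq1 x) x

lemma gq_polar (hq1 : ∀ i, qf P (bas i) = 1) (x y : Vq G) : gq P bas hq1 (x + y)
    = gq P bas hq1 x + gq P bas hq1 y + (bf P (T0 P bas hq1 x) y + bf P (T0 P bas hq1 y) x) := by
  unfold gq
  rw [map_add, bf_add_left P, bf_add_right P, bf_add_right P]
  ring

lemma gq_zero (hq1 : ∀ i, qf P (bas i) = 1) : gq P bas hq1 (0 : Vq G) = 0 := by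
  unfold gq
  rw [bf_zero_right P]

open Module in
lemma claim2 (hq1 : ∀ i, qf P (bas i) = 1) (hm : 6 < finrank (ZMod 2) (Vq G)) :
    ∃ f, qf P f = 1 ∧ gq P bas hq1 f = 1 := by
  by_contra hcon
  push_neg at hcon
  have hq1G : ∀ f, qf P f = 1 → gq P bas hq1 f = 0 := by
    intro f hf
    rcases zmod2_cases (gq P bas hq1 f) with h | h
    · exact h
    · exact absurd h (hcon f hf)
  -- step A : gq vanishes on the q = 0 part as well
  have hstepA : ∀ x, qf P x = 0 → gq P bas hq1 x = 0 := by
    intro x hx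
    by_contra hgx
    have hgx1 : gq P bas hq1 x = 1 := zmod2_eq_one_of_ne hgx
    have hx0 : x ≠ 0 := by
      intro h0
      rw [h0, gq_zero] at hgx1
      exact absurd hgx1 (by decide)
    have key : ∀ v, qf P v = 1 → bf P v x = 0 →
        bf P (T0 P bas hq1 x) v + bf P (T0 P bas hq1 v) x = 1 := by
      intro v hv hbv
      have h1 : qf P (x + v) = 1 := by
        rw [qf_add P, hx, hv, bf_symm P, hbv]
        ring
      have h2 := gq_polar P bas hq1 x v
      rw [hq1G _ h1, hgx1, hq1G _ hv] at h2
      have hgen : ∀ S : ZMod 2, (0 : ZMod 2) = 1 + 0 + S → S = 1 := by decide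
      exact hgen _ h2
    obtain ⟨u, hu1, hu2⟩ := pick1 P (bfun P x) (bfun_ne_zero P hx0) (by omega) 0 1
    have hbux : bf P u x = 0 := by simpa using hu1
    have hgind : ∀ c : ZMod 2, ¬ (∀ y, (bfun P u) y = c * (bfun P x) y) := by
      intro c hcc
      rcases zmod2_cases c with h | h <;> subst h
      · have : u = 0 := by
          apply bf_nondeg P
          intro y
          have := hcc y
          rw [bf_symm P]
          simpa using this
        rw [this, qf_zero P] at hu2
        exact absurd hu2 (by decide)
      · have : u = x := by
          apply bfun_inj P
          intro y
          have := hcc y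
          simpa using this
        rw [this, hx] at hu2
        exact absurd hu2 (by decide)
    obtain ⟨w, hw1, hw2, hw3⟩ := pick2 P (bfun P x) (bfun P u) (bfun_ne_zero P hx0)
      hgind (by omega) 0 1 1
    have hw1' : bf P w x = 0 := by simpa using hw1
    have hw2' : bf P w u = 1 := by simpa using hw2
    have hBu := key u hu2 hbux
    have hBw := key w hw3 hw1'
    have hquw : qf P (u + w) = 1 := by
      rw [qf_add P, hu2, hw3, bf_symm P u w, hw2']
      decide
    have hbuwx : bf P (u + w) x = 0 := by
      rw [bf_add_left P, hbux, hw1']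
      decide
    have hBuw := key (u + w) hquw hbuwx
    rw [bf_add_right P, map_add, bf_add_left P] at hBuw
    have hgen2 : ∀ A B C D : ZMod 2, A + C = 1 → B + D = 1 → (A + B) + (C + D) = 1 → False := by
      decide
    exact hgen2 _ _ _ _ hBu hBw hBuw
  have hstepB : ∀ x, gq P bas hq1 x = 0 := by
    intro x
    rcases zmod2_cases (qf P x) with h | h
    · exact hstepA x h
    · exact hq1G x h
  have hstepD : ∀ x y, bf P (T0 P bas hq1 x) y = bf P (T0 P bas hq1 y) x := by
    intro x y
    have := gq_polar P bas hq1 x y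
    rw [hstepB, hstepB, hstepB] at this
    have h2 : bf P (T0 P bas hq1 x) y + bf P (T0 P bas hq1 y) x = 0 := by
      linear_combination this.symm
    exact zmod2_add_eq_zero h2
  -- T0 is surjective
  have hT0inj : Function.Injective (T0 P bas hq1) := by
    intro f f' hff
    have h1 : ∀ u, bf P u (f + f') = 0 := by
      intro u
      rw [bf_add_right P, ← T0_spec P bas hq1 f u, ← T0_spec P bas hq1 f' u, hff,
        zmod2_add_self]
    apply vq_add_cancel P
    apply bf_nondeg P
    intro u
    rw [bf_symm P]
    exact h1 u
  have hT0surj : Function.Surjective (T0 P bas hq1) :=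
    LinearMap.injective_iff_surjective.mp hT0inj
  -- all commutators vanish, contradiction
  have hbfzero : ∀ a b : Vq G, bf P a b = 0 := by
    intro a b
    obtain ⟨x, rfl⟩ := hT0surj a
    obtain ⟨y, rfl⟩ := hT0surj b
    have h1 : chat bas (T0 P bas hq1 y) (T0 P bas hq1 x) = bf P (T0 P bas hq1 y) x :=
      T0_spec P bas hq1 x (T0 P bas hq1 y)
    have h2 : chat bas (T0 P bas hq1 x) (T0 P bas hq1 y) = bf P (T0 P bas hq1 x) y :=
      T0_spec P bas hq1 y (T0 P bas hq1 x)
    have h3 := chat_comm P bas (T0 P bas hq1 x) (T0 P bas hq1 y)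
    rw [h1, h2, hstepD x y] at h3
    rw [← h3, zmod2_add_self]
  haveI : Nontrivial (Vq G) := Module.nontrivial_of_finrank_pos (R := ZMod 2) (by omega)
  obtain ⟨v, hv⟩ := exists_ne (0 : Vq G)
  exact hv (bf_nondeg P v (fun u => hbfzero v u))

open Module in
/-- The master covering lemma: a good direction `f₀` exists. -/
lemma cover (hq1 : ∀ i, qf P (bas i) = 1) (hm : 6 < finrank (ZMod 2) (Vq G)) :
    ∃ f₀, qf P f₀ = 1 ∧ ∀ v, v ≠ 0 → qf P v = 0 → bf P v f₀ = 0 → ∀ δ : ZMod 2,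
      ∃ u, qf P u = 0 ∧ bf P u f₀ = 1 ∧ bf P u v = 0 ∧ chat bas u v = δ := by
  obtain ⟨f₀, hf1, hf2⟩ := claim2 P bas hq1 hm
  refine ⟨f₀, hf1, ?_⟩
  intro v hv0 hqv hbvf δ
  have hf₀0 : f₀ ≠ 0 := by
    intro h
    rw [h, qf_zero P] at hf1
    exact absurd hf1 (by decide)
  -- the three functionals are independent
  have hg : ∀ c : ZMod 2, ¬ (∀ y, (bfun P v) y = c * (bfun P f₀) y) := by
    intro c hcc
    rcases zmod2_cases c with h | h <;> subst h
    · apply hv0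
      apply bf_nondeg P
      intro y
      rw [bf_symm P]
      have := hcc y
      simpa using this
    · have : v = f₀ := by
        apply bfun_inj P
        intro y
        have := hcc y
        simpa using this
      rw [this, hf1] at hqv
      exact absurd hqv (by decide)
  set Lv : Vq G →ₗ[ZMod 2] ZMod 2 :=
    mkFun (fun u => chat bas u v) (fun x y => chat_add_left bas x y v) with hLv
  have hh : ∀ c₁ c₂ : ZMod 2, ¬ (∀ y, Lv y = c₁ * (bfun P f₀) y + c₂ * (bfun P v) y) := by
    intro c₁ c₂ hcc
    rcases zmod2_cases c₁ with h1 | h1 <;> rcases zmod2_cases c₂ with h2 | h2 <;>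
      subst h1 <;> subst h2
    · -- chat (-, v) = 0
      apply hv0
      apply chat_left_nondeg P bas hq1
      intro u
      have := hcc u
      simpa [hLv] using this
    · -- chat (-, v) = bf (-, v)
      apply hv0
      apply chat_right_nondeg P bas hq1
      intro u
      have h3 := hcc u
      simp only [hLv, mkFun_apply, bfun_apply, zero_mul, one_mul, zero_add] at h3
      have h4 := chat_comm P bas u v
      rw [h3] at h4
      have h5 : chat bas v u = 0 := by
        have h6 : bf P u v + chat bas v u = bf P u v := h4
        exact add_left_cancel (h6.trans (add_zero _).symm)
      exact h5
    · -- chat (-, v) = bf (-, f₀) : v = T0 f₀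
      have hveq : v = T0 P bas hq1 f₀ := by
        apply cmap0_inj P bas hq1
        ext u
        have := hcc u
        simp only [hLv, mkFun_apply, bfun_apply, one_mul, zero_mul, add_zero] at this
        simp only [cmap0_apply]
        rw [this, T0_spec P bas hq1]
      rw [hveq] at hbvf
      unfold gq at hf2
      rw [hbvf] at hf2
      exact absurd hf2 (by decide)
    · -- chat (-, v) = bf (-, f₀) + bf (-, v) : v = T1 f₀
      have hveq : v = T1 P bas hq1 f₀ := by
        apply cmap1_inj P bas hq1
        ext u
        have h3 := hcc u
        simp only [hLv, mkFun_apply, bfun_apply, one_mul] at h3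
        simp only [cmap1_apply]
        have h4 := chat_comm P bas u v
        rw [h3] at h4
        have h5 : chat bas v u = bf P u f₀ := by
          have hgen : ∀ F V X : ZMod 2, (F + V) + X = V → X = F := by decide
          exact hgen _ _ _ h4
        rw [h5, T1_spec P bas hq1]
      rw [hveq] at hbvf
      have := claim1 P bas hq1 f₀
      unfold gq at hf2
      rw [this, hbvf] at hf2
      exact absurd hf2 (by decide)
  obtain ⟨u, hu1, hu2, hu3, hu4⟩ := pick3 P (bfun P f₀) (bfun P v) Lv
    (bfun_ne_zero P hf₀0) hg hh hm 1 0 δ 0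
  refine ⟨u, hu4, ?_, ?_, ?_⟩
  · simpa using hu1
  · simpa using hu2
  · simpa [hLv] using hu3

end Sigma


/-! ### The main construction -/

lemma pim_zp (P : Pre G) (c : ZMod 2) : pim (zp P c) = 0 := by
  rcases zmod2_cases c with h | h <;> subst h
  · exact pim_one
  · exact pim_z P

lemma sqe_eq_zero {g : G} (h : g * g = 1) : sqe g = 0 := by
  simp [sqe, h]

section Main

open Module

variable (P : Pre G) [Module (ZMod 2) (Vq G)] [Module.Finite (ZMod 2) (Vq G)]

lemma main_construction {nn : ℕ} (bas : Basis (Fin nn) (ZMod 2) (Vq G))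
    (hq1 : ∀ i, qf P (bas i) = 1) (hm : 6 < finrank (ZMod 2) (Vq G)) :
    ∃ S : Set G, LocallyMaximalPF S ∧ ¬ Fills S := by
  classical
  obtain ⟨f₀, hf₀q, hcover⟩ := cover P bas hq1 hm
  set T : Set (Vq G) := {v | qf P v = 0 ∧ bf P v f₀ = 1} with hTdef
  set S : Set G := insert P.z ((fun v => sig bas v) '' T) with hSdef
  have hz_mem : P.z ∈ S := Set.mem_insert _ _
  have hsig_mem : ∀ v ∈ T, sig bas v ∈ S := fun v hv =>
    Set.mem_insert_of_mem _ ⟨v, hv, rfl⟩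
  have hT0 : (0 : Vq G) ∉ T := by
    intro h0
    rw [hTdef] at h0
    have := h0.2
    rw [bf_zero_left P] at this
    exact absurd this (by decide)
  -- description of membership in S
  have hmemS : ∀ a ∈ S, a = P.z ∨ ∃ v ∈ T, a = sig bas v := by
    intro a ha
    rcases Set.mem_insert_iff.mp ha with h | h
    · exact Or.inl h
    · obtain ⟨v, hv, rfl⟩ := h
      exact Or.inr ⟨v, hv, rfl⟩
  -- product-freeness
  have hPF : ProductFree S := by
    rw [ProductFree, Set.disjoint_left]
    intro a haS haSS
    obtain ⟨x, hx, y, hy, hxy⟩ := Set.mem_mul.mp haSS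
    rcases hmemS x hx with rfl | ⟨v, hv, rfl⟩ <;> rcases hmemS y hy with rfl | ⟨w, hw, rfl⟩
    · -- z * z = 1
      rw [P.hzz] at hxy
      rcases hmemS a haS with rfl | ⟨v, hv, rfl⟩
      · exact P.hz1 hxy.symm
      · have : v = 0 := by
          rw [← pim_sig bas v, ← hxy, pim_one]
        exact hT0 (this ▸ hv)
    · -- z * sig w
      have hpa : pim a = w := by
        rw [← hxy, pim_mul, pim_z P, zero_add, pim_sig]
      rcases hmemS a haS with rfl | ⟨v, hv, rfl⟩
      · rw [pim_z P] at hpa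
        exact hT0 (hpa ▸ hw)
      · rw [pim_sig] at hpa
        rw [hpa] at hxy
        have : P.z = 1 := mul_right_cancel (hxy.trans (one_mul _).symm)
        exact P.hz1 this
    · -- sig v * z
      have hpa : pim a = v := by
        rw [← hxy, pim_mul, pim_z P, add_zero, pim_sig]
      rcases hmemS a haS with rfl | ⟨w, hw, rfl⟩
      · rw [pim_z P] at hpa
        exact hT0 (hpa ▸ hv)
      · rw [pim_sig] at hpa
        rw [← hpa] at hxy
        have h2 : sig bas w * P.z = sig bas w * 1 := by
          rw [mul_one]; exact hxy
        exact P.hz1 (mul_left_cancel h2)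
    · -- sig v * sig w
      have hpa : pim a = v + w := by
        rw [← hxy, pim_mul, pim_sig, pim_sig]
      rcases hmemS a haS with rfl | ⟨u, hu, rfl⟩
      · rw [pim_z P] at hpa
        have hvw : v = w := vq_add_cancel P hpa.symm
        subst hvw
        have h2 := sig_mul P bas v v
        rw [vq_add_self P, sig_zero, one_mul, chat_diag P bas, hv.1, zp_zero] at h2
        rw [h2] at hxy
        exact P.hz1 hxy.symm
      · rw [pim_sig] at hpa
        have hphi : bf P u f₀ = 0 := by
          rw [hpa, bf_add_left P, hv.2, hw.2]
          decide
        rw [hTdef] at hu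
        rw [hu.2] at hphi
        exact absurd hphi (by decide)
  -- the missed element
  have hf₀0 : f₀ ≠ 0 := by
    intro h
    rw [h, qf_zero P] at hf₀q
    exact absurd hf₀q (by decide)
  obtain ⟨u₀, hu₀φ, hu₀q⟩ := pick1 P (bfun P f₀) (bfun_ne_zero P hf₀0) (by omega) 1 1
  have hu₀φ' : bf P u₀ f₀ = 1 := by simpa using hu₀φ
  have hu₀0 : u₀ ≠ 0 := by
    intro h
    rw [h, qf_zero P] at hu₀q
    exact absurd hu₀q (by decide)
  have hg₀1 : sig bas u₀ ≠ 1 := by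
    intro h
    apply hu₀0
    rw [← pim_sig bas u₀, h, pim_one]
  have hg₀S : sig bas u₀ ∉ S := by
    intro h
    rcases hmemS _ h with h1 | ⟨v, hv, h1⟩
    · apply hu₀0
      rw [← pim_sig bas u₀, h1, pim_z P]
    · have : u₀ = v := by
        rw [← pim_sig bas u₀, ← pim_sig bas v, h1]
      rw [this] at hu₀q
      rw [hv.1] at hu₀q
      exact absurd hu₀q (by decide)
  have hg₀SS : sig bas u₀ ∉ S * S := by
    intro h
    obtain ⟨x, hx, y, hy, hxy⟩ := Set.mem_mul.mp h
    rcases hmemS x hx with rfl | ⟨v, hv, rfl⟩ <;> rcases hmemS y hy with rfl | ⟨w, hw, rfl⟩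
    · rw [P.hzz] at hxy
      exact hg₀1 hxy.symm
    · have : w = u₀ := by
        rw [← pim_sig bas w, ← pim_sig bas u₀, ← hxy, pim_mul, pim_z P, zero_add]
      rw [this] at hw
      rw [hw.1] at hu₀q
      exact absurd hu₀q (by decide)
    · have : v = u₀ := by
        rw [← pim_sig bas v, ← pim_sig bas u₀, ← hxy, pim_mul, pim_z P, add_zero]
      rw [this] at hv
      rw [hv.1] at hu₀q
      exact absurd hu₀q (by decide)
    · have hpa : v + w = u₀ := by
        rw [← pim_sig bas v, ← pim_sig bas w, ← pim_mul, hxy, pim_sig]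
      have : bf P u₀ f₀ = 0 := by
        rw [← hpa, bf_add_left P, hv.2, hw.2]
        decide
      rw [hu₀φ'] at this
      exact absurd this (by decide)
  -- local maximality
  have hLM : ∀ T' : Set G, ProductFree T' → S ⊆ T' → S = T' := by
    intro T' hpfT' hsub
    apply Set.Subset.antisymm hsub
    intro t htT'
    by_contra htS
    have hdisj := hpfT'
    rw [ProductFree, Set.disjoint_left] at hdisj
    -- t cannot be 1
    rcases eq_or_ne t 1 with rfl | ht1
    · have h11 : (1 : G) ∈ T' * T' := by
        have := Set.mul_mem_mul htT' htT'
        rwa [one_mul] at this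
      exact hdisj htT' h11
    rcases P.hsq t with htt | htt
    · -- t is an involution
      set v : Vq G := pim t with hvdef
      have hqv : qf P v = 0 := by
        rw [hvdef, qf_pim P, sqe_eq_zero htt]
      rcases eq_or_ne v 0 with hv0 | hv0
      · -- t = z
        rcases (pim_eq_zero_iff P t).mp (hvdef ▸ hv0) with h | h
        · exact ht1 h
        · exact htS (h ▸ hz_mem)
      · have hpimt : pim t = pim (sig bas v) := by rw [pim_sig]
        rcases zmod2_cases (bf P v f₀) with hφv | hφv
        · -- the interesting case : v ∈ ker φ
          obtain ⟨δ, hδ⟩ : ∃ δ, t = sig bas v * zp P δ := by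
            rcases (pim_eq_iff P (sig bas v) t).mp hpimt.symm with h | h
            · exact ⟨0, by rw [zp_zero, mul_one]; exact h⟩
            · exact ⟨1, by rw [zp_one]; exact h⟩
          obtain ⟨u, huq, huφ, hubv, huchat⟩ := hcover v hv0 hqv hφv δ
          have huT : u ∈ T := ⟨huq, huφ⟩
          have hwT : u + v ∈ T := by
            constructor
            · rw [qf_add P, huq, hqv, hubv]; decide
            · rw [bf_add_left P, huφ, hφv]; decide
          have hprod : sig bas u * sig bas (u + v) = t := by
            rw [sig_mul P bas u (u + v)]
            have h1 : u + (u + v) = v := by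
              rw [← add_assoc, vq_add_self P, zero_add]
            have h2 : chat bas u (u + v) = δ := by
              rw [chat_add_right, chat_diag P bas, huq, zero_add, huchat]
            rw [h1, h2, ← hδ]
          exact hdisj htT'
            (hprod ▸ Set.mul_mem_mul (hsub (hsig_mem u huT)) (hsub (hsig_mem (u+v) hwT)))
        · -- v ∈ T
          have hvT : v ∈ T := ⟨hqv, hφv⟩
          rcases (pim_eq_iff P (sig bas v) t).mp hpimt.symm with h | h
          · exact htS (h ▸ hsig_mem v hvT)
          · -- t = sig v * z = z * sig v
            have : t = P.z * sig bas v := by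
              rw [h]; exact (P.hzcen _).symm
            exact hdisj htT' (this ▸ Set.mul_mem_mul (hsub hz_mem) (hsub (hsig_mem v hvT)))
    · -- t has order 4 : t * t = z
      have : P.z ∈ T' * T' := by
        rw [← htt]
        exact Set.mul_mem_mul htT' htT'
      exact hdisj (hsub hz_mem) this
  refine ⟨S, ⟨hPF, hLM⟩, ?_⟩
  intro hfills
  rcases hfills (sig bas u₀) hg₀1 with h | h
  · exact hg₀S h
  · exact hg₀SS h

end Main
end

end ESNF

theorem extraspecial_big_not_filled {G : Type*} [Group G] [Finite G]
    (hG : IsExtraspecial G) (hcard : 128 < Nat.card G) :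
    ∃ S : Set G, LocallyMaximalPF S ∧ ¬ Fills S := by
  classical
  obtain ⟨hZC, hZ2, hSQ⟩ := hG
  obtain ⟨x, y, hxy, huniv⟩ := Nat.card_eq_two_iff.mp hZ2
  have hmem : ∀ c : ↥(Subgroup.center G), c = x ∨ c = y := by
    intro c
    have : c ∈ ({x, y} : Set _) := huniv ▸ Set.mem_univ c
    simpa using this
  obtain ⟨zs, hzs1, hzsall⟩ : ∃ zs : ↥(Subgroup.center G), zs ≠ 1 ∧
      ∀ c : ↥(Subgroup.center G), c = 1 ∨ c = zs := by
    rcases hmem 1 with h | h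
    · refine ⟨y, fun hy => hxy ?_, fun c => ?_⟩
      · rw [← h, hy]
      · rcases hmem c with hc | hc
        · left; rw [hc, ← h]
        · right; exact hc
    · refine ⟨x, fun hx => hxy ?_, fun c => ?_⟩
      · rw [hx, h]
      · rcases hmem c with hc | hc
        · right; exact hc
        · left; rw [hc, ← h]
  set z : G := (zs : G) with hzdef
  have hzmem : z ∈ Subgroup.center G := zs.2
  have hcenchar : ∀ g : G, g ∈ Subgroup.center G → (g = 1 ∨ g = z) := by
    intro g hg
    rcases hzsall ⟨g, hg⟩ with h | h
    · left; exact Subtype.ext_iff.mp h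
    · right; exact Subtype.ext_iff.mp h
  have hz1 : z ≠ 1 := fun h => hzs1 (Subtype.ext h)
  have hzcen : ∀ g, z * g = g * z := fun g =>
    (Subgroup.mem_center_iff.mp hzmem g).symm
  have hzz : z * z = 1 := by
    have hmem2 : z * z ∈ Subgroup.center G := mul_mem hzmem hzmem
    rcases hcenchar _ hmem2 with h | h
    · exact h
    · exact absurd (mul_right_cancel (h.trans (one_mul z).symm)) hz1
  have hcen : ∀ g : G, (∀ h, g * h = h * g) → g = 1 ∨ g = z := by
    intro g hg
    apply hcenchar
    rw [Subgroup.mem_center_iff]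
    intro h
    exact (hg h).symm
  have hsq : ∀ g : G, g * g = 1 ∨ g * g = z := by
    intro g
    have h2 : g * g ∈ Subgroup.center G := by
      have := hSQ g
      rwa [pow_two] at this
    exact hcenchar _ h2
  have hcom : ∀ g h : G, g * h = h * g ∨ g * h = h * g * z := by
    intro g h
    have h2 : g * h * g⁻¹ * h⁻¹ ∈ Subgroup.center G := by
      rw [hZC]
      exact Subgroup.commutator_mem_commutator (Subgroup.mem_top g) (Subgroup.mem_top h)
    rcases hcenchar _ h2 with hc | hc
    · left
      have hc' : g * h * g⁻¹ * h⁻¹ = 1 := hc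
      calc g * h = (g * h * g⁻¹ * h⁻¹) * (h * g) := by group
      _ = 1 * (h * g) := by rw [hc']
      _ = h * g := one_mul _
    · right
      have hc' : g * h * g⁻¹ * h⁻¹ = z := hc
      calc g * h = (g * h * g⁻¹ * h⁻¹) * (h * g) := by group
      _ = z * (h * g) := by rw [hc']
      _ = h * g * z := by rw [hzcen]
  have hker : ∀ g : G, Abelianization.of g = 1 ↔ (g = 1 ∨ g = z) := by
    intro g
    have hiff : Abelianization.of g = 1 ↔ g ∈ commutator G := QuotientGroup.eq_one_iff g
    rw [hiff, ← hZC]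
    constructor
    · exact hcenchar g
    · intro hg
      rcases hg with rfl | rfl
      · exact one_mem _
      · exact hzmem
  set P : ESNF.Pre G := ⟨z, hz1, hzz, hzcen, hcen, hsq, hcom, hker⟩ with hP
  letI : Module (ZMod 2) (ESNF.Vq G) := AddCommGroup.zmodModule (by
    intro x
    rw [two_smul]
    exact ESNF.vq_add_self P x)
  letI : Module.Finite (ZMod 2) (ESNF.Vq G) := Module.Finite.of_finite
  have hcardV : Nat.card (ESNF.Vq G) = 2 ^ (Module.finrank (ZMod 2) (ESNF.Vq G)) := by
    letI : Fintype (ESNF.Vq G) := Fintype.ofFinite _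
    rw [Nat.card_eq_fintype_card]
    rw [Module.card_fintype (Module.finBasis (ZMod 2) (ESNF.Vq G))]
    rw [ZMod.card 2]
    congr 1
    exact Fintype.card_fin _
  have hfactor : Nat.card G = Nat.card (G ⧸ commutator G) * Nat.card (commutator G) :=
    Subgroup.card_eq_card_quotient_mul_card_subgroup _
  have hcardcomm : Nat.card ↥(commutator G) = 2 := by rw [← hZC]; exact hZ2
  have hquot : Nat.card (G ⧸ commutator G) = Nat.card (ESNF.Vq G) := rfl
  have hm : 6 < Module.finrank (ZMod 2) (ESNF.Vq G) := by
    by_contra hh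
    push_neg at hh
    have hle : Nat.card G ≤ 128 := by
      rw [hfactor, hcardcomm, hquot, hcardV]
      have h6 : (2:ℕ) ^ (Module.finrank (ZMod 2) (ESNF.Vq G)) ≤ 2 ^ 6 :=
        Nat.pow_le_pow_right (by norm_num) hh
      omega
    omega
  obtain ⟨bas, hq1⟩ := ESNF.exists_q1_basis P (by omega)
  exact ESNF.main_construction P bas hq1 hm
end

section
/- Let G be a finite filled group of order 2ⁿ·p, where n ≥ 2 and p is an odd prime, and suppose G has a normal subgroup of order p. Then G contains a central involution. -/
open Pointwise

lemma pf_not_mem_mul {G : Type*} [Group G] {T : Set G} (h : ProductFree T)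
    {a b c : G} (ha : a ∈ T) (hb : b ∈ T) (hc : c ∈ T) (habc : a * b = c) : False :=
  Set.disjoint_left.mp h hc (habc ▸ Set.mul_mem_mul ha hb)

lemma preimage_lmpf {G H : Type*} [Group G] [Group H] [Nontrivial H] (φ : G →* H)
    (hφ : Function.Surjective φ) {S : Set H} (hS : LocallyMaximalPF S) :
    LocallyMaximalPF (φ ⁻¹' S) := by
  obtain ⟨hSpf, hSmax⟩ := hS
  have hSne : S.Nonempty := by
    rcases S.eq_empty_or_nonempty with h | h
    · obtain ⟨x, hx⟩ := exists_ne (1 : H)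
      have hpf : ProductFree {x} := by
        rw [ProductFree, Set.singleton_mul_singleton, Set.disjoint_singleton]
        exact fun hxx => hx (by rwa [right_eq_mul] at hxx)
      have := hSmax {x} hpf (h ▸ Set.empty_subset _)
      exact absurd (h ▸ this).symm (Set.singleton_ne_empty x)
    · exact h
  have hPpf : ProductFree (φ ⁻¹' S) := by
    rw [ProductFree, Set.disjoint_left]
    rintro x hx ⟨a, ha, b, hb, rfl⟩
    exact pf_not_mem_mul hSpf ha hb hx (map_mul φ a b).symm
  refine ⟨hPpf, fun T hT hPT => ?_⟩
  refine Set.Subset.antisymm hPT fun t ht => ?_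
  by_contra hts
  have key : ProductFree (insert (φ t) S) := by
    rw [ProductFree, Set.disjoint_left]
    intro x hx hxmul
    rw [Set.mem_mul] at hxmul
    obtain ⟨a, ha, b, hb, hab⟩ := hxmul
    rw [Set.mem_insert_iff] at hx ha hb
    rcases ha with rfl | ha <;> rcases hb with rfl | hb
    · rcases hx with hx | hx
      · rw [hx] at hab
        have h1 : φ t = 1 := mul_eq_left.mp hab
        obtain ⟨s, hs⟩ := hSne
        obtain ⟨g, hg⟩ := hφ s
        have hgT : g ∈ T := hPT (by simp [Set.mem_preimage, hg, hs])
        have hgtT : g * t ∈ T := hPT (by simp [Set.mem_preimage, map_mul, hg, h1, hs])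
        exact pf_not_mem_mul hT hgT ht hgtT rfl
      · have : t * t ∈ φ ⁻¹' S := by simp [Set.mem_preimage, map_mul, hab, hx]
        exact pf_not_mem_mul hT ht ht (hPT this) rfl
    · rcases hx with hx | hx
      · rw [hx] at hab
        have hb1 : b = 1 := mul_eq_left.mp hab
        have h1S : (1 : H) ∈ S := hb1 ▸ hb
        exact pf_not_mem_mul hSpf h1S h1S h1S (one_mul 1)
      · obtain ⟨y, hy⟩ := hφ x
        have hyT : y ∈ T := hPT (by simp [Set.mem_preimage, hy, hx])
        have hphib : φ (t⁻¹ * y) = b := by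
          rw [map_mul, map_inv, hy, ← hab]; group
        have hbT : t⁻¹ * y ∈ T := hPT (by simp [Set.mem_preimage, hphib, hb])
        exact pf_not_mem_mul hT ht hbT hyT (by group)
    · rcases hx with hx | hx
      · rw [hx] at hab
        have ha1 : a = 1 := mul_eq_right.mp hab
        have h1S : (1 : H) ∈ S := ha1 ▸ ha
        exact pf_not_mem_mul hSpf h1S h1S h1S (one_mul 1)
      · obtain ⟨y, hy⟩ := hφ x
        have hyT : y ∈ T := hPT (by simp [Set.mem_preimage, hy, hx])
        have hphia : φ (y * t⁻¹) = a := by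
          rw [map_mul, map_inv, hy, ← hab]; group
        have haT : y * t⁻¹ ∈ T := hPT (by simp [Set.mem_preimage, hphia, ha])
        exact pf_not_mem_mul hT haT ht hyT (by group)
    · rcases hx with hx | hx
      · obtain ⟨y, hy⟩ := hφ a
        have hyT : y ∈ T := hPT (by simp [Set.mem_preimage, hy, ha])
        have hphib : φ (y⁻¹ * t) = b := by
          rw [map_mul, map_inv, hy, ← hx, ← hab]; group
        have hbT : y⁻¹ * t ∈ T := hPT (by simp [Set.mem_preimage, hphib, hb])
        exact pf_not_mem_mul hT hyT hbT ht (by group)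
      · obtain ⟨y, hy⟩ := hφ a
        obtain ⟨z, hz⟩ := hφ b
        have hyT : y ∈ T := hPT (by simp [Set.mem_preimage, hy, ha])
        have hzT : z ∈ T := hPT (by simp [Set.mem_preimage, hz, hb])
        have : y * z ∈ φ ⁻¹' S := by simp [Set.mem_preimage, map_mul, hy, hz, hab, hx]
        exact pf_not_mem_mul hT hyT hzT (hPT this) rfl
  have := hSmax _ key (Set.subset_insert _ _)
  exact hts (this ▸ Set.mem_insert _ _)

lemma filled_of_surjective {G H : Type*} [Group G] [Group H] [Nontrivial H]
    (φ : G →* H) (hφ : Function.Surjective φ) (hG : Filled G) : Filled H := by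
  intro S hS g hg
  have hP := preimage_lmpf φ hφ hS
  obtain ⟨x, rfl⟩ := hφ g
  have hx1 : x ≠ 1 := fun h => hg (by simp [h])
  rcases hG _ hP x hx1 with h | h
  · exact Or.inl h
  · rw [Set.mem_mul] at h
    obtain ⟨a, ha, b, hb, rfl⟩ := h
    exact Or.inr (map_mul φ a b ▸ Set.mul_mem_mul ha hb)

lemma not_filled_zmod4 : ¬ Filled (Multiplicative (ZMod 4)) := by
  intro h
  set z : Multiplicative (ZMod 4) := Multiplicative.ofAdd 2 with hz
  have hpf : ProductFree {z} := by
    rw [ProductFree, Set.singleton_mul_singleton, Set.disjoint_singleton]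
    decide
  have hlm : LocallyMaximalPF {z} := by
    refine ⟨hpf, fun T hT hzT => ?_⟩
    refine Set.Subset.antisymm hzT fun t ht => ?_
    have hzmem : z ∈ T := hzT rfl
    have h4 : ∀ s : ZMod 4, s = 0 ∨ s = 1 ∨ s = 2 ∨ s = 3 := by decide
    rcases h4 (Multiplicative.toAdd t) with h0 | h1 | h2 | h3
    · exfalso
      have ht1 : t = 1 := by
        have : t = Multiplicative.ofAdd 0 := by rw [← h0]; rfl
        simpa using this
      exact pf_not_mem_mul hT ht ht ht (by rw [ht1, one_mul])
    · exfalso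
      have htt : t * t = z := by
        have h2 : Multiplicative.toAdd (t * t) = 2 := by
          rw [toAdd_mul, h1]; decide
        have := congrArg Multiplicative.ofAdd h2
        simpa using this
      exact pf_not_mem_mul hT ht ht hzmem htt
    · have : t = z := by
        have := congrArg Multiplicative.ofAdd h2
        simpa using this
      simp [this]
    · exfalso
      have htt : t * t = z := by
        have h2 : Multiplicative.toAdd (t * t) = 2 := by
          rw [toAdd_mul, h3]; decide
        have := congrArg Multiplicative.ofAdd h2
        simpa using this
      exact pf_not_mem_mul hT ht ht hzmem htt
  have := h _ hlm (Multiplicative.ofAdd 1) (by decide)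
  rcases this with h1 | h1
  · rw [Set.mem_singleton_iff] at h1
    exact absurd h1 (by decide)
  · rw [Set.singleton_mul_singleton, Set.mem_singleton_iff] at h1
    exact absurd h1 (by decide)

def addAutToMulAut {A : Type*} [AddGroup A] :
    Multiplicative (AddAut A) →* MulAut (Multiplicative A) :=
  (MulAutMultiplicative A).symm.toMonoidHom

lemma addAutToMulAut_surjective {A : Type*} [AddGroup A] :
    Function.Surjective (addAutToMulAut (A := A)) :=
  (MulAutMultiplicative A).symm.surjective

theorem filled_central_involution {G : Type*} [Group G] [Finite G]
    (p n : ℕ) (hp : p.Prime) (hodd : Odd p) (hn : 2 ≤ n)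
    (hcard : Nat.card G = 2 ^ n * p) (hG : Filled G)
    (N : Subgroup G) (hN : N.Normal) (hNp : Nat.card N = p) :
    ∃ z : G, z ∈ Subgroup.center G ∧ orderOf z = 2 := by
  classical
  haveI := hN
  haveI : Fact p.Prime := ⟨hp⟩
  have hp2 : p ≠ 2 := by rintro rfl; exact absurd hodd (by decide)
  set θ : G →* MulAut N := MulAut.conjNormal with hθ
  set K := θ.ker with hK
  set r := Nat.card θ.range with hr
  haveI hNcyc : IsCyclic N := isCyclic_of_prime_card hNp
  -- MulAut N is cyclic
  have hMA : IsCyclic (MulAut N) := by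
    have e : Multiplicative (ZMod p) ≃* N := hNp ▸ zmodCyclicMulEquiv hNcyc
    exact isCyclic_of_surjective
      (((MulAut.congr e).toMonoidHom.comp addAutToMulAut).comp
        ((ZMod.AddAutEquivUnits p).toMultiplicative.symm.toMonoidHom :
          (ZMod p)ˣ →* Multiplicative (AddAut (ZMod p))))
      ((MulAut.congr e).surjective.comp (addAutToMulAut_surjective.comp
        (ZMod.AddAutEquivUnits p).toMultiplicative.symm.surjective))
  -- card of MulAut N
  have hAut : Nat.card (MulAut N) = p - 1 := by
    rw [IsCyclic.card_mulAut, hNp, Nat.totient_prime hp]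
  have hrAut : r ∣ p - 1 := hAut ▸ Subgroup.card_subgroup_dvd_card θ.range
  have hrq : Nat.card (G ⧸ K) = r :=
    Nat.card_congr (QuotientGroup.quotientKerEquivRange θ).toEquiv
  have hKmul : r * Nat.card K = 2 ^ n * p := by
    rw [← hrq, ← hcard, ← Subgroup.card_eq_card_quotient_mul_card_subgroup K]
  have hrG : r ∣ 2 ^ n * p := ⟨Nat.card K, hKmul.symm⟩
  have hpr : ¬ p ∣ r := by
    intro h
    have h1 : p ∣ p - 1 := h.trans hrAut
    have hple := hp.two_le
    have h2 : 0 < p - 1 := by omega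
    have := Nat.le_of_dvd h2 h1
    omega
  have hr2 : r ∣ 2 ^ n :=
    (Nat.Coprime.dvd_of_dvd_mul_right ((hp.coprime_iff_not_dvd.mpr hpr).symm) hrG)
  by_cases h4 : 4 ∣ r
  · -- Case 1 : contradiction with filledness
    exfalso
    haveI : IsCyclic θ.range := Subgroup.isCyclic _
    have e2 : Multiplicative (ZMod r) ≃* θ.range := zmodCyclicMulEquiv this
    let ψ : Multiplicative (ZMod r) →* Multiplicative (ZMod 4) :=
      AddMonoidHom.toMultiplicative (ZMod.castHom h4 (ZMod 4)).toAddMonoidHom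
    have hψ : Function.Surjective ψ := by
      intro y
      obtain ⟨x, hx⟩ := ZMod.ringHom_surjective (ZMod.castHom h4 (ZMod 4)) y.toAdd
      exact ⟨Multiplicative.ofAdd x, by simpa [ψ] using congrArg Multiplicative.ofAdd hx⟩
    let Φ : G →* Multiplicative (ZMod 4) :=
      ψ.comp ((e2.symm.toMonoidHom).comp θ.rangeRestrict)
    have hΦ : Function.Surjective Φ :=
      hψ.comp (e2.symm.surjective.comp θ.rangeRestrict_surjective)
    haveI : Nontrivial (Multiplicative (ZMod 4)) :=
      ⟨⟨Multiplicative.ofAdd 0, Multiplicative.ofAdd 1, by decide⟩⟩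
    exact not_filled_zmod4 (filled_of_surjective Φ hΦ hG)
  · -- Case 2 : construct a central involution
    obtain ⟨k, hkn, hrk⟩ := (Nat.dvd_prime_pow Nat.prime_two).mp hr2
    have hk1 : k ≤ 1 := by
      by_contra hk
      exact h4 (hrk ▸ pow_dvd_pow 2 (by omega : 2 ≤ k))
    have h2K : 2 ∣ Nat.card K := by
      have hrd : r ∣ 2 ^ (n - 1) := hrk ▸ pow_dvd_pow 2 (by omega)
      obtain ⟨c, hc⟩ := hrd
      have hrpos : 0 < r := Nat.card_pos
      have h2n : 2 ^ n = 2 ^ (n-1) * 2 := by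
        rw [← pow_succ]
        congr 1
        omega
      have : r * Nat.card K = r * (c * 2 * p) := by
        rw [hKmul, h2n, hc]; ring
      have := Nat.eq_of_mul_eq_mul_left hrpos this
      exact ⟨c * p, by rw [this]; ring⟩
    haveI : Fact (Nat.Prime 2) := ⟨Nat.prime_two⟩
    obtain ⟨Q⟩ : Nonempty (Sylow 2 G) := inferInstance
    have hfact : (Nat.card G).factorization 2 = n := by
      rw [hcard, Nat.factorization_mul (pow_ne_zero n two_ne_zero) hp.pos.ne',
        Nat.Prime.factorization_pow Nat.prime_two, Nat.Prime.factorization hp]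
      simp [Finsupp.single_apply, hp2]
    have hQcard : Nat.card Q = 2 ^ n := by
      rw [Sylow.card_eq_multiplicity, hfact]
    letI act : MulAction ↥(Q : Subgroup G) ↥K :=
      { smul := fun q x => MulAut.conjNormal (q : G) x
        one_smul := fun x => by
          show MulAut.conjNormal (((1 : ↥(Q : Subgroup G)) : G)) x = x
          simp
        mul_smul := fun a b x => by
          show MulAut.conjNormal (((a * b : ↥(Q : Subgroup G)) : G)) x =
            MulAut.conjNormal ((a : G)) (MulAut.conjNormal ((b : G)) x)
          simp [map_mul] }
    have hmod := IsPGroup.card_modEq_card_fixedPoints (p := 2) Q.isPGroup' (α := ↥K)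
    set F := Subgroup.centralizer ((Q : Subgroup G) : Set G) ⊓ K with hF
    have hcardF : Nat.card (MulAction.fixedPoints ↥(Q : Subgroup G) ↥K) = Nat.card F := by
      apply Nat.card_congr
      refine Equiv.ofBijective (fun x => ⟨((x : ↥K) : G), Subgroup.mem_inf.mpr ⟨?_, (x : ↥K).2⟩⟩)
        ⟨?_, ?_⟩
      · refine Subgroup.mem_centralizer_iff.mpr fun g hg => ?_
        have hx : MulAut.conjNormal g ((x : ↥K)) = (x : ↥K) :=
          x.2 (⟨g, hg⟩ : ↥(Q : Subgroup G))
        have hval : g * ((x : ↥K) : G) * g⁻¹ = ((x : ↥K) : G) := by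
          have := congrArg (Subtype.val) hx
          simpa [MulAut.conjNormal_apply] using this
        exact mul_inv_eq_iff_eq_mul.mp hval
      · intro a b h
        have h' : ((a : ↥K) : G) = ((b : ↥K) : G) := congrArg (fun y : ↥F => (y : G)) h
        exact Subtype.ext (Subtype.ext h')
      · rintro ⟨y, hy⟩
        obtain ⟨hyc, hyK⟩ := Subgroup.mem_inf.mp hy
        refine ⟨⟨⟨y, hyK⟩, fun q => ?_⟩, rfl⟩
        show MulAut.conjNormal ((q : G)) (⟨y, hyK⟩ : ↥K) = ⟨y, hyK⟩
        apply Subtype.ext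
        have hcomm := Subgroup.mem_centralizer_iff.mp hyc (q : G) q.2
        simp [MulAut.conjNormal_apply]
        rw [hcomm]
        group
    have h2F : 2 ∣ Nat.card F := by
      rw [← hcardF]
      exact (Nat.modEq_zero_iff_dvd).mp
        (hmod.symm.trans ((Nat.modEq_zero_iff_dvd).mpr h2K))
    obtain ⟨z, hz2⟩ := exists_prime_orderOf_dvd_card' (G := ↥F) 2 h2F
    obtain ⟨hzc, hzK⟩ := Subgroup.mem_inf.mp z.2
    refine ⟨(z : G), ?_, by rw [Subgroup.orderOf_coe]; exact hz2⟩
    -- z is central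
    have hND : N ≤ Subgroup.centralizer {(z : G)} := by
      intro t ht
      refine Subgroup.mem_centralizer_iff.mpr fun g hg => ?_
      rw [Set.mem_singleton_iff] at hg
      subst hg
      have h1 : θ (z : G) = 1 := hzK
      have h2 : MulAut.conjNormal (z : G) (⟨t, ht⟩ : ↥N) = ⟨t, ht⟩ := by
        rw [show MulAut.conjNormal (z : G) = θ (z : G) from rfl, h1]
        rfl
      have h3 : (z : G) * t * (z : G)⁻¹ = t := by
        have := congrArg Subtype.val h2
        simpa [MulAut.conjNormal_apply] using this
      exact mul_inv_eq_iff_eq_mul.mp h3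
    have hQD : (Q : Subgroup G) ≤ Subgroup.centralizer {(z : G)} := by
      intro q hq
      refine Subgroup.mem_centralizer_iff.mpr fun g hg => ?_
      rw [Set.mem_singleton_iff] at hg
      subst hg
      exact (Subgroup.mem_centralizer_iff.mp hzc q hq).symm
    have hcop : (Nat.Coprime (2 ^ n) p) :=
      Nat.Coprime.pow_left n ((Nat.coprime_primes Nat.prime_two hp).mpr (Ne.symm hp2))
    have hdp : p ∣ Nat.card ↥(N ⊔ (Q : Subgroup G)) :=
      hNp ▸ Subgroup.card_dvd_of_le le_sup_left
    have hd2 : 2 ^ n ∣ Nat.card ↥(N ⊔ (Q : Subgroup G)) :=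
      hQcard ▸ Subgroup.card_dvd_of_le le_sup_right
    have hdvd : 2 ^ n * p ∣ Nat.card ↥(N ⊔ (Q : Subgroup G)) :=
      hcop.mul_dvd_of_dvd_of_dvd hd2 hdp
    have hle : Nat.card ↥(N ⊔ (Q : Subgroup G)) ∣ 2 ^ n * p :=
      hcard ▸ Subgroup.card_subgroup_dvd_card _
    have hsup_top : N ⊔ (Q : Subgroup G) = ⊤ :=
      Subgroup.eq_top_of_card_eq _ (by rw [Nat.dvd_antisymm hle hdvd, hcard])
    refine Subgroup.mem_center_iff.mpr fun g => ?_
    have hgD : g ∈ Subgroup.centralizer {(z : G)} :=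
      (sup_le hND hQD) (hsup_top ▸ Subgroup.mem_top g)
    exact (Subgroup.mem_centralizer_iff.mp hgD _ rfl).symm
end
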